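/- arXiv:2511.01041 — 8 statements merged into one kernel-verified Lean document; each statement's English description precedes it below -/
import Mathlib

section
/- For every fixed M > 0, the class C_M is compact in the strong local Sobolev topology: for every sequence (u_n) of functions in C_M there exist a subsequence (u_{n_k}) and a function u ∈ C_M such that u_{n_k} converges to u uniformly on every compact subset of Ω, and for every compact set K ⊂ Ω and every exponent 1 ≤ p < ∞ one has ∫_K |∇u_{n_k}(x) − ∇u(x)|^p dx → 0 as k → ∞. -/
open Filter MeasureTheory Topology
open scoped RealInnerProductSpace InnerProductSpace

set_option maxHeartbeats 1000000
set_option linter.unusedSectionVars false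
set_option linter.unusedVariables false

section Aux
open Metric

variable {E : Type*} [NormedAddCommGroup E] [InnerProductSpace ℝ E]

/-- one-sided Lipschitz estimate for bounded concave functions -/
lemma aux_lip {Ω : Set E} {w : E → ℝ} {M ε : ℝ}
    (hw : ConcaveOn ℝ Ω w) (h0 : ∀ z ∈ Ω, 0 ≤ w z) (hM : ∀ z ∈ Ω, w z ≤ M)
    (hε : 0 < ε) {x y : E} (hx : x ∈ Ω) (hball : Metric.closedBall y ε ⊆ Ω) :
    w x - w y ≤ M / ε * ‖x - y‖ := by
  have hy : y ∈ Ω := hball (Metric.mem_closedBall_self hε.le)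
  rcases eq_or_ne x y with rfl | hxy
  · simp
  have hr : (0:ℝ) < ‖x - y‖ := by
    simpa [sub_eq_zero] using norm_pos_iff.2 (sub_ne_zero.2 hxy)
  set r : ℝ := ‖x - y‖ with hrdef
  set z : E := y + (ε / r) • (y - x) with hz
  have hzΩ : z ∈ Ω := by
    apply hball
    have : dist z y = ε := by
      rw [dist_eq_norm]
      have : z - y = (ε / r) • (y - x) := by rw [hz]; abel
      rw [this, norm_smul]
      have : ‖y - x‖ = r := by rw [hrdef, norm_sub_rev]
      rw [this]
      rw [Real.norm_of_nonneg (div_pos hε hr).le]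
      field_simp
    simp [Metric.mem_closedBall, this.le]
  set t : ℝ := ε / (ε + r) with ht
  have hεr : (0:ℝ) < ε + r := by linarith
  have ht0 : 0 < t := div_pos hε hεr
  have ht1 : t < 1 := by
    rw [ht, div_lt_one hεr]; linarith
  have hcomb : t • x + (1 - t) • z = y := by
    have h1t : 1 - t = r / (ε + r) := by
      rw [ht]; field_simp; ring
    have h2 : (1 - t) * (ε / r) = t := by
      rw [h1t, ht]; field_simp
    rw [hz, smul_add, smul_smul, h2]
    module
  have hcc := hw.2 hx hzΩ ht0.le (by linarith : (0:ℝ) ≤ 1 - t) (by ring)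
  rw [hcomb] at hcc
  -- w y ≥ t * w x + (1-t) * w z ≥ t * w x
  have hwz : 0 ≤ w z := h0 z hzΩ
  have hwy : t * w x ≤ w y := by
    have : t • w x + (1 - t) • w z ≤ w y := hcc
    simp only [smul_eq_mul] at this
    nlinarith
  have hwxM : w x ≤ M := hM x hx
  have hwx0 : 0 ≤ w x := h0 x hx
  have : w x - w y ≤ (1 - t) * w x := by nlinarith
  have h1t : 1 - t = r / (ε + r) := by rw [ht]; field_simp; ring
  calc w x - w y ≤ (1 - t) * w x := this
    _ ≤ r / (ε + r) * M := by rw [h1t]; apply mul_le_mul_of_nonneg_left hwxM (by positivity)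
    _ ≤ M / ε * r := by
        have hM0 : 0 ≤ M := le_trans hwx0 hwxM
        rw [div_mul_eq_mul_div, div_mul_eq_mul_div, div_le_div_iff₀ hεr hε]
        nlinarith [mul_nonneg (mul_nonneg hM0 hr.le) hr.le]
/-- two-sided local Lipschitz estimate -/
lemma aux_pair {Ω : Set E} {w : E → ℝ} {M r : ℝ}
    (hw : ConcaveOn ℝ Ω w) (h0 : ∀ z ∈ Ω, 0 ≤ w z) (hM : ∀ z ∈ Ω, w z ≤ M)
    (hr : 0 < r) {c x y : E} (hc : Metric.closedBall c (2 * r) ⊆ Ω)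
    (hx : x ∈ Metric.closedBall c r) (hy : y ∈ Metric.closedBall c r) :
    |w x - w y| ≤ M / r * ‖x - y‖ := by
  have hsub : ∀ z ∈ Metric.closedBall c r, Metric.closedBall z r ⊆ Metric.closedBall c (2*r) := by
    intro z hz p hp
    rw [Metric.mem_closedBall] at *
    calc dist p c ≤ dist p z + dist z c := dist_triangle _ _ _
      _ ≤ r + r := add_le_add hp hz
      _ = 2 * r := by ring
  have hxΩ : x ∈ Ω := hc (hsub x hx (Metric.mem_closedBall_self hr.le))
  have hyΩ : y ∈ Ω := hc (hsub y hy (Metric.mem_closedBall_self hr.le))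
  rw [abs_sub_le_iff]
  constructor
  · exact aux_lip hw h0 hM hr hxΩ ((hsub y hy).trans hc)
  · rw [norm_sub_rev]
    exact aux_lip hw h0 hM hr hyΩ ((hsub x hx).trans hc)

/-- Lipschitz on a ball -/
lemma aux_lipOn {Ω : Set E} {w : E → ℝ} {M r : ℝ}
    (hw : ConcaveOn ℝ Ω w) (h0 : ∀ z ∈ Ω, 0 ≤ w z) (hM : ∀ z ∈ Ω, w z ≤ M)
    (hr : 0 < r) {c : E} (hc : Metric.closedBall c (2 * r) ⊆ Ω) :
    LipschitzOnWith (M / r).toNNReal w (Metric.closedBall c r) := by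
  have hM0 : 0 ≤ M := by
    have h1 := h0 c (hc (Metric.mem_closedBall_self (by linarith)))
    have h2 := hM c (hc (Metric.mem_closedBall_self (by linarith)))
    linarith
  apply LipschitzOnWith.of_dist_le_mul
  intro x hx y hy
  rw [Real.dist_eq, dist_eq_norm, Real.coe_toNNReal _ (by positivity)]
  exact aux_pair hw h0 hM hr hc hx hy
/-- slope along a direction tends to the directional derivative, from the right -/
lemma aux_slope {w : E → ℝ} {x e : E} (hd : DifferentiableAt ℝ w x) :
    Tendsto (fun t : ℝ => (w (x + t • e) - w x) / t) (𝓝[>] (0:ℝ))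
      (𝓝 (fderiv ℝ w x e)) := by
  have hc : HasDerivAt (fun t : ℝ => x + t • e) e 0 := by
    simpa using ((hasDerivAt_id (0:ℝ)).smul_const e).const_add x
  have hcomp : HasDerivAt (fun t : ℝ => w (x + t • e)) (fderiv ℝ w x e) 0 := by
    have hd' : HasFDerivAt w (fderiv ℝ w x) (x + (0:ℝ) • e) := by
      simpa using hd.hasFDerivAt
    have := (hd'.comp_hasDerivAt 0 (by simpa using hc) : HasDerivAt
      (fun t : ℝ => w (x + t • e)) _ 0)
    exact this
  have := (hasDerivAt_iff_tendsto_slope.1 hcomp).mono_left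
    (nhdsWithin_mono _ (by intro t ht; exact ne_of_gt ht : Set.Ioi (0:ℝ) ⊆ {(0:ℝ)}ᶜ))
  refine this.congr (fun t => ?_)
  simp [slope, div_eq_inv_mul]
variable [CompleteSpace E]

lemma aux_inner_grad {w : E → ℝ} (x h : E) :
    ⟪gradient w x, h⟫_ℝ = fderiv ℝ w x h :=
  InnerProductSpace.toDual_symm_apply

/-- gradient inequality for concave functions -/
lemma aux_grad_ineq {Ω : Set E} {w : E → ℝ}
    (hw : ConcaveOn ℝ Ω w) {x y : E} (hx : x ∈ Ω) (hy : y ∈ Ω)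
    (hd : DifferentiableAt ℝ w x) :
    w y ≤ w x + ⟪gradient w x, y - x⟫_ℝ := by
  rw [aux_inner_grad]
  have hslope := aux_slope (e := y - x) hd
  have hev : ∀ᶠ t : ℝ in 𝓝[>] (0:ℝ),
      w y - w x ≤ (w (x + t • (y - x)) - w x) / t := by
    filter_upwards [Ioo_mem_nhdsGT_of_mem (by norm_num : (0:ℝ) ∈ Set.Ico 0 1)]
      with t ht
    have ht0 : 0 < t := ht.1
    have ht1 : t < 1 := ht.2
    have hmem : x + t • (y - x) ∈ Ω := by
      have : x + t • (y - x) = (1 - t) • x + t • y := by module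
      rw [this]
      exact hw.1 hx hy (by linarith) ht0.le (by ring)
    have hcc := hw.2 hx hy (by linarith : (0:ℝ) ≤ 1 - t) ht0.le (by ring)
    have : (1 - t) • x + t • y = x + t • (y - x) := by module
    rw [this] at hcc
    simp only [smul_eq_mul] at hcc
    rw [le_div_iff₀ ht0]
    nlinarith
  have := ge_of_tendsto hslope hev
  linarith
variable [FiniteDimensional ℝ E] [MeasurableSpace E] [BorelSpace E]
variable {μ : Measure E} [μ.IsAddHaarMeasure]

/-- a.e. differentiability of bounded concave functions on an open set -/
lemma aux_ae_diff {Ω : Set E} {w : E → ℝ} {M : ℝ}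
    (hΩo : IsOpen Ω) (hw : ConcaveOn ℝ Ω w)
    (h0 : ∀ z ∈ Ω, 0 ≤ w z) (hM : ∀ z ∈ Ω, w z ≤ M) :
    ∀ᵐ x ∂μ, x ∈ Ω → DifferentiableAt ℝ w x := by
  have hloc : ∀ z : E, z ∈ Ω → ∃ r : ℝ, 0 < r ∧ Metric.closedBall z (2 * r) ⊆ Ω := by
    intro z hz
    obtain ⟨ε, hε, hball⟩ := Metric.isOpen_iff.1 hΩo z hz
    exact ⟨ε / 3, by linarith, fun p hp => hball (by
      rw [Metric.mem_closedBall] at hp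
      rw [Metric.mem_ball]
      linarith)⟩
  choose! r hr hrsub using hloc
  obtain ⟨T, hTc, hTeq⟩ := TopologicalSpace.isOpen_iUnion_countable
    (fun z : ↥Ω => Metric.ball (z : E) (r z)) (fun _ => Metric.isOpen_ball)
  have hclaim : ∀ i : ↥Ω, ∀ᵐ x ∂μ, x ∈ Metric.ball (i : E) (r i) → DifferentiableAt ℝ w x := by
    intro i
    have hlip := aux_lipOn hw h0 hM (hr i i.2) (hrsub i i.2)
    obtain ⟨g, hg, heq⟩ := hlip.extend_real
    filter_upwards [hg.ae_differentiableAt (μ := μ)] with x hx hxball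
    have heq' : w =ᶠ[𝓝 x] g := by
      filter_upwards [Metric.isOpen_ball.mem_nhds hxball] with y hy
      exact heq (Metric.ball_subset_closedBall hy)
    exact heq'.differentiableAt_iff.2 hx
  have hT : ∀ᵐ x ∂μ, ∀ i ∈ T, x ∈ Metric.ball (i : E) (r i) → DifferentiableAt ℝ w x :=
    (ae_ball_iff hTc).2 fun i _ => hclaim i
  filter_upwards [hT] with x hx hxΩ
  have : x ∈ ⋃ i ∈ T, Metric.ball (i : E) (r i) := by
    rw [hTeq]
    exact Set.mem_iUnion.2 ⟨⟨x, hxΩ⟩, Metric.mem_ball_self (hr x hxΩ)⟩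
  obtain ⟨i, hiT, hxb⟩ := Set.mem_iUnion₂.1 this
  exact hx i hiT hxb

/-- gradient norm bound at differentiability points -/
lemma aux_grad_bound {Ω : Set E} {w : E → ℝ} {M r : ℝ}
    (hw : ConcaveOn ℝ Ω w) (h0 : ∀ z ∈ Ω, 0 ≤ w z) (hM : ∀ z ∈ Ω, w z ≤ M)
    (hr : 0 < r) {c : E} (hc : Metric.closedBall c (2 * r) ⊆ Ω)
    {x : E} (hx : x ∈ Metric.ball c r) (hd : DifferentiableAt ℝ w x) :
    ‖gradient w x‖ ≤ M / r := by
  have hM0 : 0 ≤ M := by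
    have h1 := h0 c (hc (Metric.mem_closedBall_self (by linarith)))
    have h2 := hM c (hc (Metric.mem_closedBall_self (by linarith)))
    linarith
  have hlip := aux_lipOn hw h0 hM hr hc
  have hnb : Metric.closedBall c r ∈ 𝓝 x :=
    mem_of_superset (Metric.isOpen_ball.mem_nhds hx) Metric.ball_subset_closedBall
  have := hd.hasFDerivAt.le_of_lipschitzOn hnb hlip
  have hnorm : ‖gradient w x‖ = ‖fderiv ℝ w x‖ := by
    rw [gradient]
    exact (InnerProductSpace.toDual ℝ E).symm.norm_map _
  rw [hnorm]
  exact this.trans_eq (Real.coe_toNNReal _ (by positivity))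
/-- Determination of the gradient of `v` from a supporting inequality. -/
lemma aux_support_unique {Ω : Set E} (hΩo : IsOpen Ω) {v : E → ℝ} {x ξ : E}
    (hx : x ∈ Ω) (hdv : DifferentiableAt ℝ v x)
    (hsupp : ∀ y ∈ Ω, v y ≤ v x + ⟪ξ, y - x⟫) :
    gradient v x = ξ := by
  have key : ∀ e : E, fderiv ℝ v x e ≤ ⟪ξ, e⟫ := by
    intro e
    have hslope := aux_slope (e := e) hdv
    have hev : ∀ᶠ t : ℝ in 𝓝[>] (0:ℝ), (v (x + t • e) - v x) / t ≤ ⟪ξ, e⟫ := by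
      have hmem : ∀ᶠ t : ℝ in 𝓝 (0:ℝ), x + t • e ∈ Ω := by
        have hcont : Continuous (fun t : ℝ => x + t • e) := by continuity
        have : Tendsto (fun t : ℝ => x + t • e) (𝓝 0) (𝓝 x) := by
          simpa using hcont.tendsto 0
        exact this.eventually (hΩo.mem_nhds hx)
      filter_upwards [nhdsWithin_le_nhds hmem, self_mem_nhdsWithin] with t hmem ht
      have ht0 : (0:ℝ) < t := ht
      have := hsupp _ hmem
      rw [show x + t • e - x = t • e by abel, inner_smul_right] at this
      rw [div_le_iff₀ ht0]
      nlinarith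
    exact le_of_tendsto hslope hev
  have key2 : ∀ e : E, fderiv ℝ v x e = ⟪ξ, e⟫ := by
    intro e
    refine le_antisymm (key e) ?_
    have := key (-e)
    rw [map_neg, inner_neg_right] at this
    linarith
  have hfd : fderiv ℝ v x = InnerProductSpace.toDual ℝ E ξ := by
    ext e
    rw [key2 e, InnerProductSpace.toDual_apply_apply]
  rw [gradient, hfd, LinearIsometryEquiv.symm_apply_apply]
/-- pointwise convergence of gradients -/
lemma aux_grad_conv {Ω : Set E} (hΩo : IsOpen Ω) {w : ℕ → E → ℝ} {v : E → ℝ}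
    {L : ℝ} {x : E} (hx : x ∈ Ω)
    (hw : ∀ k, ConcaveOn ℝ Ω (w k))
    (hconv : ∀ y ∈ Ω, Tendsto (fun k => w k y) atTop (𝓝 (v y)))
    (hb : ∀ k, ‖gradient (w k) x‖ ≤ L)
    (hdk : ∀ k, DifferentiableAt ℝ (w k) x)
    (hdv : DifferentiableAt ℝ v x) :
    Tendsto (fun k => gradient (w k) x) atTop (𝓝 (gradient v x)) := by
  apply tendsto_of_subseq_tendsto
  intro ns hns
  have hmem : ∀ n, gradient (w (ns n)) x ∈ Metric.closedBall (0:E) L := by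
    intro n
    simpa [Metric.mem_closedBall, dist_eq_norm] using hb (ns n)
  obtain ⟨ξ, -, ms, hms, hmslim⟩ :=
    (ProperSpace.isCompact_closedBall (0:E) L).tendsto_subseq hmem
  refine ⟨ms, ?_⟩
  have hξ : gradient v x = ξ := by
    apply aux_support_unique hΩo hx hdv
    intro y hy
    have hineq : ∀ n, w (ns (ms n)) y ≤ w (ns (ms n)) x
        + ⟪gradient (w (ns (ms n))) x, y - x⟫ :=
      fun n => aux_grad_ineq (hw _) hx hy (hdk _)
    have h1 : Tendsto (fun n => w (ns (ms n)) y) atTop (𝓝 (v y)) :=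
      (hconv y hy).comp ((hns.comp hms.tendsto_atTop))
    have h2 : Tendsto (fun n => w (ns (ms n)) x
        + ⟪gradient (w (ns (ms n))) x, y - x⟫) atTop (𝓝 (v x + ⟪ξ, y - x⟫)) := by
      exact ((hconv x hx).comp (hns.comp hms.tendsto_atTop)).add
        ((hmslim.inner tendsto_const_nhds))
    exact le_of_tendsto_of_tendsto' h1 h2 hineq
  rw [hξ]
  exact hmslim

end Aux

/-- Compactness of the class `C_M` of concave functions `0 ≤ u ≤ M` on a bounded open convex
set `Ω ⊂ ℝ^d` in the strong local Sobolev topology: every sequence in `C_M` has a subsequence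
converging uniformly on compact subsets of `Ω` to some `v ∈ C_M`, with the gradients converging
in `L^p(K)` for every compact `K ⊆ Ω` and every `1 ≤ p < ∞`. -/
theorem compactness_of_CM (d : ℕ) (Ω : Set (EuclideanSpace ℝ (Fin d)))
    (hΩne : Ω.Nonempty) (hΩo : IsOpen Ω) (hΩb : Bornology.IsBounded Ω)
    (hΩconv : Convex ℝ Ω) (M : ℝ) (hM : 0 < M)
    (u : ℕ → EuclideanSpace ℝ (Fin d) → ℝ)
    (hu : ∀ n, ConcaveOn ℝ Ω (u n) ∧ ∀ x ∈ Ω, 0 ≤ u n x ∧ u n x ≤ M) :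
    ∃ (φ : ℕ → ℕ) (v : EuclideanSpace ℝ (Fin d) → ℝ), StrictMono φ ∧
      (ConcaveOn ℝ Ω v ∧ ∀ x ∈ Ω, 0 ≤ v x ∧ v x ≤ M) ∧
      (∀ K : Set (EuclideanSpace ℝ (Fin d)), K ⊆ Ω → IsCompact K →
        TendstoUniformlyOn (fun k => u (φ k)) v atTop K) ∧
      (∀ K : Set (EuclideanSpace ℝ (Fin d)), K ⊆ Ω → IsCompact K →
        ∀ p : ℝ, 1 ≤ p →
          Tendsto (fun k => ∫ x in K, ‖gradient (u (φ k)) x - gradient v x‖ ^ p)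
            atTop (𝓝 0)) := by
  classical
  -- countable dense subset of Ω
  obtain ⟨t, htc, htd⟩ := TopologicalSpace.exists_countable_dense ↥Ω
  set D : Set (EuclideanSpace ℝ (Fin d)) := Subtype.val '' t with hD
  have hDc : D.Countable := htc.image _
  have hDΩ : D ⊆ Ω := by rintro _ ⟨z, -, rfl⟩; exact z.2
  have hDdense : ∀ x ∈ Ω, ∀ r > (0:ℝ), (D ∩ Metric.ball x r).Nonempty := by
    intro x hx r hr
    obtain ⟨z, hzt, hzb⟩ := htd.exists_dist_lt (⟨x, hx⟩ : ↥Ω) hr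
    refine ⟨(z : EuclideanSpace ℝ (Fin d)), ⟨Set.mem_image_of_mem _ hzt, ?_⟩⟩
    rw [Metric.mem_ball]
    simpa [Subtype.dist_eq, dist_comm] using hzb
  -- extraction of a subsequence converging on D
  haveI : Countable ↥D := hDc.to_subtype
  set F : ℕ → (↥D → Set.Icc (0:ℝ) M) := fun n z =>
    ⟨u n z, ((hu n).2 z (hDΩ z.2)).1, ((hu n).2 z (hDΩ z.2)).2⟩ with hF
  obtain ⟨G, φ, hφ, hG⟩ := SeqCompactSpace.tendsto_subseq F
  refine ⟨φ, ?_⟩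
  have hDconv : ∀ z : ↥D, Tendsto (fun k => u (φ k) (z : EuclideanSpace ℝ (Fin d)))
      atTop (𝓝 (G z : ℝ)) := by
    intro z
    have h1 : Tendsto (fun k => (F ∘ φ) k z) atTop (𝓝 (G z)) := (tendsto_pi_nhds.1 hG) z
    exact (continuous_subtype_val.tendsto _).comp h1
  -- convergence at every point of Ω
  have hucont : ∀ x ∈ Ω, ∃ l : ℝ, Tendsto (fun k => u (φ k) x) atTop (𝓝 l) := by
    intro x hx
    apply cauchySeq_tendsto_of_complete
    rw [Metric.cauchySeq_iff]
    intro ε' hε'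
    obtain ⟨ρ, hρ, hball⟩ := Metric.isOpen_iff.1 hΩo x hx
    have hr : (0:ℝ) < ρ / 3 := by linarith
    have h2r : Metric.closedBall x (2 * (ρ/3)) ⊆ Ω := fun q hq => hball (by
      rw [Metric.mem_closedBall] at hq; rw [Metric.mem_ball]; linarith)
    set δ : ℝ := min (ρ/3) (ε' * (ρ/3) / (8 * M)) with hδdef
    have hδ : 0 < δ := lt_min hr (by positivity)
    obtain ⟨z, hzD, hzball⟩ := hDdense x hx δ hδ
    have hzK : z ∈ Metric.closedBall x (ρ/3) :=
      Metric.ball_subset_closedBall (Metric.ball_subset_ball (min_le_left _ _) hzball)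
    have hlip : ∀ n, |u n x - u n z| ≤ M / (ρ/3) * ‖x - z‖ := fun n =>
      aux_pair (hu n).1 (fun q hq => ((hu n).2 q hq).1) (fun q hq => ((hu n).2 q hq).2)
        hr h2r (Metric.mem_closedBall_self hr.le) hzK
    have hxz : ‖x - z‖ < δ := by
      rw [← dist_eq_norm, dist_comm]; exact hzball
    have hout : ∀ n, |u n x - u n z| < ε' / 8 := by
      intro n
      calc |u n x - u n z| ≤ M / (ρ/3) * ‖x - z‖ := hlip n
        _ < M / (ρ/3) * δ := by
            apply mul_lt_mul_of_pos_left _ (by positivity)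
            exact hxz
        _ ≤ M / (ρ/3) * (ε' * (ρ/3) / (8 * M)) := by
            apply mul_le_mul_of_nonneg_left (min_le_right _ _) (by positivity)
        _ = ε' / 8 := by field_simp
    have hcz : CauchySeq (fun k => u (φ k) z) := (hDconv ⟨z, hzD⟩).cauchySeq
    rw [Metric.cauchySeq_iff] at hcz
    obtain ⟨N, hN⟩ := hcz (ε' / 2) (by linarith)
    refine ⟨N, fun m hm n hn => ?_⟩
    have h1 := hout (φ m)
    have h2 := hout (φ n)
    have h3 := hN m hm n hn
    rw [Real.dist_eq] at h3 ⊢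
    calc |u (φ m) x - u (φ n) x|
        ≤ |u (φ m) x - u (φ m) z| + |u (φ m) z - u (φ n) z| + |u (φ n) z - u (φ n) x| := by
          have := abs_sub_le (u (φ m) x) (u (φ m) z) (u (φ n) x)
          have h4 := abs_sub_le (u (φ m) z) (u (φ n) z) (u (φ n) x)
          linarith
      _ < ε' / 8 + ε' / 2 + ε' / 8 := by
          rw [abs_sub_comm (u (φ n) z)]
          exact add_lt_add (add_lt_add h1 h3) h2
      _ ≤ ε' := by linarith
  -- the limit function
  set v : EuclideanSpace ℝ (Fin d) → ℝ :=
    fun x => limUnder atTop (fun k => u (φ k) x) with hvdef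
  have hv : ∀ x ∈ Ω, Tendsto (fun k => u (φ k) x) atTop (𝓝 (v x)) := by
    intro x hx
    obtain ⟨l, hl⟩ := hucont x hx
    have hvx : v x = l := hl.limUnder_eq
    rw [hvx]; exact hl
  -- v belongs to C_M
  have hvconc : ConcaveOn ℝ Ω v := by
    refine ⟨hΩconv, fun x hx y hy a b ha hb hab => ?_⟩
    have h1 : Tendsto (fun k => a * u (φ k) x + b * u (φ k) y) atTop
        (𝓝 (a * v x + b * v y)) := ((hv x hx).const_mul a).add ((hv y hy).const_mul b)
    have h2 := hv _ (hΩconv hx hy ha hb hab)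
    have h3 := le_of_tendsto_of_tendsto' h1 h2
      (fun k => (hu (φ k)).1.2 hx hy ha hb hab)
    simpa [smul_eq_mul] using h3
  have hvbdd : ∀ x ∈ Ω, 0 ≤ v x ∧ v x ≤ M := fun x hx =>
    ⟨ge_of_tendsto (hv x hx) (Eventually.of_forall fun k => ((hu (φ k)).2 x hx).1),
     le_of_tendsto (hv x hx) (Eventually.of_forall fun k => ((hu (φ k)).2 x hx).2)⟩
  -- geometric setup for compact subsets
  have hsetup : ∀ K : Set (EuclideanSpace ℝ (Fin d)), K ⊆ Ω → IsCompact K →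
      ∃ r : ℝ, 0 < r ∧ ∀ x ∈ K, Metric.closedBall x (2 * r) ⊆ Ω := by
    intro K hKΩ hK
    rcases K.eq_empty_or_nonempty with rfl | hne
    · exact ⟨1, one_pos, by simp⟩
    obtain ⟨δ, hδ, hthick⟩ := hK.exists_thickening_subset_open hΩo hKΩ
    refine ⟨δ / 3, by linarith, fun x hx q hq => hthick ?_⟩
    rw [Metric.mem_closedBall] at hq
    rw [Metric.mem_thickening_iff]
    exact ⟨x, hx, by linarith⟩
  -- uniform Lipschitz estimates around points of a compact set
  have hlipu : ∀ (r : ℝ), 0 < r → ∀ x, Metric.closedBall x (2*r) ⊆ Ω →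
      ∀ n, ∀ z ∈ Metric.closedBall x r, |u n x - u n z| ≤ M / r * ‖x - z‖ := by
    intro r hr x h2r n z hz
    exact aux_pair (hu n).1 (fun q hq => ((hu n).2 q hq).1)
      (fun q hq => ((hu n).2 q hq).2) hr h2r (Metric.mem_closedBall_self hr.le) hz
  have hlipv : ∀ (r : ℝ), 0 < r → ∀ x, Metric.closedBall x (2*r) ⊆ Ω →
      ∀ z ∈ Metric.closedBall x r, |v x - v z| ≤ M / r * ‖x - z‖ := by
    intro r hr x h2r z hz
    have hxΩ : x ∈ Ω := h2r (Metric.mem_closedBall_self (by linarith))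
    have hzΩ : z ∈ Ω := h2r (Metric.closedBall_subset_closedBall (by linarith) hz)
    have h1 : Tendsto (fun k => |u (φ k) x - u (φ k) z|) atTop (𝓝 (|v x - v z|)) :=
      ((hv x hxΩ).sub (hv z hzΩ)).abs
    exact le_of_tendsto h1 (Eventually.of_forall fun k => hlipu r hr x h2r (φ k) z hz)
  -- uniform convergence on compact subsets
  have hunif : ∀ K : Set (EuclideanSpace ℝ (Fin d)), K ⊆ Ω → IsCompact K →
      TendstoUniformlyOn (fun k => u (φ k)) v atTop K := by
    intro K hKΩ hK
    obtain ⟨r, hr, h2r⟩ := hsetup K hKΩ hK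
    set L : ℝ := M / r with hLdef
    have hL0 : 0 < L := div_pos hM hr
    rw [Metric.tendstoUniformlyOn_iff]
    intro ε hε
    set ρ : ℝ := min r (ε / (4 * L)) with hρdef
    have hρ : 0 < ρ := lt_min hr (by positivity)
    have hcover : K ⊆ ⋃ z : ↥K, Metric.ball (z : EuclideanSpace ℝ (Fin d)) ρ :=
      fun x hx => Set.mem_iUnion.2 ⟨⟨x, hx⟩, Metric.mem_ball_self hρ⟩
    obtain ⟨s, hs⟩ := hK.elim_finite_subcover
      (fun z : ↥K => Metric.ball (z : EuclideanSpace ℝ (Fin d)) ρ)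
      (fun _ => Metric.isOpen_ball) hcover
    have hev : ∀ᶠ k in atTop, ∀ z ∈ s,
        dist (v (z : EuclideanSpace ℝ (Fin d))) (u (φ k) (z : EuclideanSpace ℝ (Fin d)))
          < ε / 3 := by
      rw [eventually_all_finset]
      intro z hz
      have h1 := Metric.tendsto_nhds.1 (hv z (hKΩ z.2)) (ε/3) (by linarith)
      filter_upwards [h1] with k hk
      rw [dist_comm]; exact hk
    filter_upwards [hev] with k hk x hx
    obtain ⟨z, hzs, hxz⟩ : ∃ z ∈ s, x ∈ Metric.ball (z : EuclideanSpace ℝ (Fin d)) ρ := by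
      simpa using hs hx
    have hxcb : x ∈ Metric.closedBall (z : EuclideanSpace ℝ (Fin d)) r :=
      Metric.closedBall_subset_closedBall (min_le_left _ _) (Metric.ball_subset_closedBall hxz)
    have hnorm : ‖(z : EuclideanSpace ℝ (Fin d)) - x‖ ≤ ρ := by
      rw [← dist_eq_norm, dist_comm]
      exact (Metric.ball_subset_closedBall hxz)
    have e1 : |v (z : EuclideanSpace ℝ (Fin d)) - v x| ≤ L * ρ := by
      refine le_trans (hlipv r hr _ (h2r z z.2) x hxcb) ?_
      exact mul_le_mul_of_nonneg_left hnorm hL0.le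
    have e2 : |u (φ k) (z : EuclideanSpace ℝ (Fin d)) - u (φ k) x| ≤ L * ρ := by
      refine le_trans (hlipu r hr _ (h2r z z.2) (φ k) x hxcb) ?_
      exact mul_le_mul_of_nonneg_left hnorm hL0.le
    have e3 := hk z hzs
    have hLρ : L * ρ ≤ ε / 4 := by
      calc L * ρ ≤ L * (ε / (4 * L)) :=
            mul_le_mul_of_nonneg_left (min_le_right _ _) hL0.le
        _ = ε / 4 := by field_simp
    rw [Real.dist_eq] at e3 ⊢
    have habs : |v x - u (φ k) x| ≤
        |v x - v (z : EuclideanSpace ℝ (Fin d))|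
        + |v (z : EuclideanSpace ℝ (Fin d)) - u (φ k) (z : EuclideanSpace ℝ (Fin d))|
        + |u (φ k) (z : EuclideanSpace ℝ (Fin d)) - u (φ k) x| := by
      have h5 := abs_sub_le (v x) (v (z : EuclideanSpace ℝ (Fin d))) (u (φ k) x)
      have h6 := abs_sub_le (v (z : EuclideanSpace ℝ (Fin d)))
        (u (φ k) (z : EuclideanSpace ℝ (Fin d))) (u (φ k) x)
      linarith
    have e1' : |v x - v (z : EuclideanSpace ℝ (Fin d))| ≤ L * ρ := by
      rwa [abs_sub_comm]
    linarith
  refine ⟨v, hφ, ⟨hvconc, hvbdd⟩, hunif, ?_⟩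
  -- L^p convergence of gradients
  intro K hKΩ hK p hp
  obtain ⟨r, hr, h2r⟩ := hsetup K hKΩ hK
  set L : ℝ := M / r with hLdef
  have hL0 : 0 < L := div_pos hM hr
  have hp0 : (0:ℝ) < p := lt_of_lt_of_le one_pos hp
  have hdiffu : ∀ᵐ x : EuclideanSpace ℝ (Fin d),
      ∀ k : ℕ, x ∈ Ω → DifferentiableAt ℝ (u (φ k)) x :=
    ae_all_iff.2 fun k => aux_ae_diff hΩo (hu (φ k)).1
      (fun z hz => ((hu (φ k)).2 z hz).1) (fun z hz => ((hu (φ k)).2 z hz).2)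
  have hdiffv : ∀ᵐ x : EuclideanSpace ℝ (Fin d), x ∈ Ω → DifferentiableAt ℝ v x :=
    aux_ae_diff hΩo hvconc (fun z hz => (hvbdd z hz).1) (fun z hz => (hvbdd z hz).2)
  haveI : IsFiniteMeasure (volume.restrict K) :=
    ⟨by rw [Measure.restrict_apply_univ]; exact hK.measure_lt_top⟩
  have hgb : ∀ w : EuclideanSpace ℝ (Fin d) → ℝ, ConcaveOn ℝ Ω w →
      (∀ z ∈ Ω, 0 ≤ w z ∧ w z ≤ M) → ∀ x ∈ K, DifferentiableAt ℝ w x →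
      ‖gradient w x‖ ≤ L := by
    intro w hw hb x hx hd
    exact aux_grad_bound hw (fun z hz => (hb z hz).1) (fun z hz => (hb z hz).2)
      hr (h2r x hx) (Metric.mem_ball_self hr) hd
  have haeK : ∀ᵐ x ∂(volume.restrict K),
      (∀ k, DifferentiableAt ℝ (u (φ k)) x) ∧ DifferentiableAt ℝ v x ∧ x ∈ K := by
    rw [ae_restrict_iff' hK.measurableSet]
    filter_upwards [hdiffu, hdiffv] with x h1 h2 hxK
    exact ⟨fun k => h1 k (hKΩ hxK), h2 (hKΩ hxK), hxK⟩
  have hcontp : Continuous (fun s : ℝ => s ^ p) :=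
    continuous_iff_continuousAt.2 fun s => Real.continuousAt_rpow_const s p (Or.inr hp0.le)
  have hmg : ∀ w : EuclideanSpace ℝ (Fin d) → ℝ, Measurable (gradient w) := fun w =>
    ((InnerProductSpace.toDual ℝ _).symm.continuous.measurable).comp (measurable_fderiv ℝ w)
  have hmeas : ∀ k, AEStronglyMeasurable
      (fun x => ‖gradient (u (φ k)) x - gradient v x‖ ^ p) (volume.restrict K) := by
    intro k
    apply Measurable.aestronglyMeasurable
    exact (hcontp.measurable).comp ((hmg _).sub (hmg _)).norm
  have hbound : ∀ k, ∀ᵐ x ∂(volume.restrict K),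
      ‖‖gradient (u (φ k)) x - gradient v x‖ ^ p‖ ≤ (2*L)^p := by
    intro k
    filter_upwards [haeK] with x hx
    obtain ⟨hk, hvv, hxK⟩ := hx
    rw [Real.norm_of_nonneg (Real.rpow_nonneg (norm_nonneg _) _)]
    apply Real.rpow_le_rpow (norm_nonneg _) ?_ hp0.le
    calc ‖gradient (u (φ k)) x - gradient v x‖
        ≤ ‖gradient (u (φ k)) x‖ + ‖gradient v x‖ := norm_sub_le _ _
      _ ≤ L + L := add_le_add (hgb _ (hu (φ k)).1 (hu (φ k)).2 x hxK (hk k))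
          (hgb _ hvconc hvbdd x hxK hvv)
      _ = 2*L := by ring
  have hlim : ∀ᵐ x ∂(volume.restrict K),
      Tendsto (fun k => ‖gradient (u (φ k)) x - gradient v x‖ ^ p) atTop
        (𝓝 ((fun _ : EuclideanSpace ℝ (Fin d) => (0:ℝ)) x)) := by
    filter_upwards [haeK] with x hx
    obtain ⟨hk, hvv, hxK⟩ := hx
    have hgc : Tendsto (fun k => gradient (u (φ k)) x) atTop (𝓝 (gradient v x)) :=
      aux_grad_conv hΩo (hKΩ hxK) (fun k => (hu (φ k)).1) (fun y hy => hv y hy)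
        (fun k => hgb _ (hu (φ k)).1 (hu (φ k)).2 x hxK (hk k)) hk hvv
    have h0 : Tendsto (fun k => ‖gradient (u (φ k)) x - gradient v x‖) atTop (𝓝 0) :=
      tendsto_iff_norm_sub_tendsto_zero.1 hgc
    have h1 := h0.rpow_const (Or.inr hp0.le)
    simpa [Real.zero_rpow (ne_of_gt hp0)] using h1
  have hdom := tendsto_integral_of_dominated_convergence (μ := volume.restrict K)
    (fun _ => (2*L)^p) hmeas (integrable_const _) hbound hlim
  simpa using hdom
end

section
/- Let φ : Ω × ℝ × ℝ^d → [0, +∞] be measurable with respect to the product of the Lebesgue σ-algebra on Ω and the Borel σ-algebras on ℝ and ℝ^d, and assume that for almost every x ∈ Ω the function (s, p) ↦ φ(x, s, p) is lower semicontinuous on ℝ × ℝ^d. Then for every M > 0 the minimization problem min { ∫_Ω φ(x, u(x), ∇u(x)) dx : u ∈ C_M } admits at least one solution, i.e. there exists u ∈ C_M such that ∫_Ω φ(x, u(x), ∇u(x)) dx ≤ ∫_Ω φ(x, v(x), ∇v(x)) dx for every v ∈ C_M. -/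
open Filter MeasureTheory Topology Metric Set InnerProductSpace

section AuxCM

variable {H : Type*} [NormedAddCommGroup H] [InnerProductSpace ℝ H]

/-- One-sided Lipschitz bound for concave functions bounded between 0 and M. -/
lemma CMaux.concave_lip {Ω : Set H} {M : ℝ} {v : H → ℝ}
    (hv : ConcaveOn ℝ Ω v) (h0 : ∀ x ∈ Ω, 0 ≤ v x) (hMv : ∀ x ∈ Ω, v x ≤ M)
    {z : H} {r : ℝ} (hr : 0 < r) (hball : ball z (2*r) ⊆ Ω)
    {x y : H} (hx : x ∈ ball z r) (hy : y ∈ ball z r) :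
    v x - v y ≤ (M / r) * ‖x - y‖ := by
  rcases eq_or_ne x y with rfl | hne
  · have hM0 : 0 ≤ M := le_trans (h0 x (hball (ball_subset_ball (by linarith) hx)))
      (hMv x (hball (ball_subset_ball (by linarith) hx)))
    simp [mul_nonneg (div_nonneg hM0 hr.le) (norm_nonneg _)]
  have hxΩ : x ∈ Ω := hball (ball_subset_ball (by linarith) hx)
  have hyΩ : y ∈ Ω := hball (ball_subset_ball (by linarith) hy)
  set nrm : ℝ := ‖y - x‖ with hnrm
  have hnrm0 : 0 < nrm := by
    simpa [hnrm] using sub_ne_zero.2 (Ne.symm hne)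
  set w : H := y + (r / nrm) • (y - x) with hw
  have hwz : w ∈ ball z (2*r) := by
    have : ‖w - z‖ ≤ ‖y - z‖ + ‖(r / nrm) • (y - x)‖ := by
      rw [hw, show y + (r / nrm) • (y - x) - z = y - z + (r / nrm) • (y - x) by abel]
      exact norm_add_le _ _
    have h2 : ‖(r / nrm) • (y - x)‖ = r := by
      rw [norm_smul, Real.norm_eq_abs, abs_of_pos (div_pos hr hnrm0)]
      field_simp
      exact hnrm.symm
    rw [mem_ball, dist_eq_norm]
    have hyz : ‖y - z‖ < r := by rw [← dist_eq_norm]; exact hy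
    calc ‖w - z‖ ≤ ‖y - z‖ + r := by rw [← h2]; exact this
    _ < 2*r := by linarith
  have hwΩ : w ∈ Ω := hball hwz
  set t : ℝ := nrm / (nrm + r) with ht
  have hden : 0 < nrm + r := by linarith
  have ht0 : 0 ≤ t := div_nonneg hnrm0.le hden.le
  have ht1 : 1 - t = r / (nrm + r) := by
    rw [ht, eq_div_iff hden.ne', sub_mul, div_mul_cancel₀ _ hden.ne']; ring
  have h1t0 : 0 ≤ 1 - t := by rw [ht1]; positivity
  have hcomb : (1 - t) • x + t • w = y := by
    have htr : t * (r / nrm) = 1 - t := by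
      rw [ht1, ht, div_mul_div_comm, mul_comm nrm r, mul_div_mul_right _ _ hnrm0.ne']
    rw [hw, smul_add, smul_smul, htr]
    module
  have hconc := hv.2 hxΩ hwΩ h1t0 ht0 (by ring)
  rw [hcomb] at hconc
  have hvw : 0 ≤ v w := h0 _ hwΩ
  have hkey : v x - v y ≤ t * v x := by
    have : (1 - t) * v x ≤ v y := by
      have : (1-t) * v x + t * 0 ≤ (1-t) * v x + t * v w := by nlinarith
      simpa using this.trans (by simpa [smul_eq_mul] using hconc)
    nlinarith
  have htle : t ≤ nrm / r := by
    rw [ht, div_le_div_iff₀ hden hr]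
    nlinarith
  have hvx : v x ≤ M := hMv _ hxΩ
  have hvx0 : 0 ≤ v x := h0 _ hxΩ
  calc v x - v y ≤ t * v x := hkey
    _ ≤ (nrm / r) * M := by
        apply mul_le_mul htle hvx hvx0 (by positivity)
    _ = (M / r) * ‖x - y‖ := by rw [norm_sub_rev x y, ← hnrm]; ring

/-- The directional derivative at `x` of `v` along `w`, as a limit of right slopes. -/
lemma CMaux.slope_tendsto_fderiv {v : H → ℝ} {x w : H} (hd : DifferentiableAt ℝ v x) :
    Tendsto (fun t : ℝ => (v (x + t • w) - v x) / t) (𝓝[>] (0:ℝ))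
      (𝓝 (fderiv ℝ v x w)) := by
  have hline : HasDerivAt (fun t : ℝ => x + t • w) w 0 := by
    simpa using ((hasDerivAt_id (0:ℝ)).smul_const w).const_add x
  have hcomp : HasDerivAt (fun t : ℝ => v (x + t • w)) (fderiv ℝ v x w) 0 := by
    have hfd : HasFDerivAt v (fderiv ℝ v x) (x + (0:ℝ) • w) := by
      simpa using hd.hasFDerivAt
    exact (hfd.comp_hasDerivAt 0 hline)
  have := hcomp.tendsto_slope_zero_right
  simpa [div_eq_inv_mul] using this

/-- Supporting hyperplane inequality for a concave function differentiable at `x`. -/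
lemma CMaux.concave_subgrad [CompleteSpace H] {Ω : Set H} {v : H → ℝ} (hv : ConcaveOn ℝ Ω v)
    {x : H} (hx : x ∈ Ω) (hd : DifferentiableAt ℝ v x) {y : H} (hy : y ∈ Ω) :
    v y ≤ v x + ⟪gradient v x, y - x⟫_ℝ := by
  have hiner : ⟪gradient v x, y - x⟫_ℝ = fderiv ℝ v x (y - x) := toDual_symm_apply
  rw [hiner]
  have hslope := CMaux.slope_tendsto_fderiv (w := y - x) hd
  have hev : ∀ᶠ t in 𝓝[>] (0:ℝ), v y - v x ≤ (v (x + t • (y - x)) - v x) / t := by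
    filter_upwards [Ioc_mem_nhdsGT_of_mem (α := ℝ) ⟨le_refl 0, zero_lt_one⟩] with t ht
    have hco : (1 - t) • v x + t • v y ≤ v ((1 - t) • x + t • y) :=
      hv.2 hx hy (by linarith [ht.2]) ht.1.le (by ring)
    have hpt : x + t • (y - x) = (1 - t) • x + t • y := by module
    rw [hpt, le_div_iff₀ ht.1]
    simp only [smul_eq_mul] at hco
    nlinarith
  have := ge_of_tendsto hslope hev
  linarith

/-- Bound on the gradient of a concave function with values in `[0, M]`. -/
lemma CMaux.concave_grad_bound [CompleteSpace H] {Ω : Set H} {M : ℝ} {v : H → ℝ}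
    (hv : ConcaveOn ℝ Ω v)
    (h0 : ∀ x ∈ Ω, 0 ≤ v x) (hMv : ∀ x ∈ Ω, v x ≤ M)
    {x : H} {r : ℝ} (hx : x ∈ Ω) (hr : 0 < r) (hball : ball x r ⊆ Ω) :
    ‖gradient v x‖ ≤ 2 * M / r := by
  have hM0 : 0 ≤ M := le_trans (h0 x hx) (hMv x hx)
  rcases eq_or_ne (gradient v x) 0 with hg | hg
  · rw [hg, norm_zero]; positivity
  by_cases hd : DifferentiableAt ℝ v x
  swap
  · rw [gradient_eq_zero_of_not_differentiableAt hd, norm_zero]; positivity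
  set g := gradient v x with hgdef
  have hgn : 0 < ‖g‖ := norm_pos_iff.2 hg
  set y : H := x - ((r/2)/‖g‖) • g with hy
  have hyx : y - x = -(((r/2)/‖g‖) • g) := by rw [hy]; abel
  have hymem : y ∈ Ω := by
    apply hball
    rw [mem_ball, dist_eq_norm, hyx, norm_neg, norm_smul, Real.norm_eq_abs,
      abs_of_pos (by positivity)]
    rw [div_mul_cancel₀ _ hgn.ne']
    linarith
  have hsub := CMaux.concave_subgrad hv hx hd hymem
  rw [hyx, inner_neg_right, real_inner_smul_right, real_inner_self_eq_norm_sq] at hsub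
  have hinq : (r/2)/‖g‖ * ‖g‖^2 = (r/2) * ‖g‖ := by
    field_simp
  rw [hinq] at hsub
  have h1 : 0 ≤ v y := h0 _ hymem
  have h2 : v x ≤ M := hMv _ hx
  have : (r/2) * ‖g‖ ≤ M := by linarith
  rw [le_div_iff₀ hr]
  nlinarith

/-- A global subgradient of a function differentiable at an interior point equals the gradient. -/
lemma CMaux.subgrad_eq_gradient [CompleteSpace H] {Ω : Set H} (hΩo : IsOpen Ω) {u : H → ℝ}
    {x : H} (hx : x ∈ Ω)
    (hd : DifferentiableAt ℝ u x) {p : H}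
    (hp : ∀ y ∈ Ω, u y ≤ u x + ⟪p, y - x⟫_ℝ) : p = gradient u x := by
  have key : ∀ w : H, ⟪gradient u x, w⟫_ℝ ≤ ⟪p, w⟫_ℝ := by
    intro w
    obtain ⟨ε, hε, hball⟩ := Metric.isOpen_iff.1 hΩo x hx
    have hiner : ⟪gradient u x, w⟫_ℝ = fderiv ℝ u x w := toDual_symm_apply
    rw [hiner]
    have hslope := CMaux.slope_tendsto_fderiv (w := w) hd
    refine le_of_tendsto hslope ?_
    have hδ : 0 < ε / (‖w‖ + 1) := by positivity
    filter_upwards [Ioo_mem_nhdsGT_of_mem (α := ℝ) ⟨le_refl 0, hδ⟩] with t ht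
    have hmem : x + t • w ∈ Ω := by
      apply hball
      rw [mem_ball, dist_eq_norm, add_sub_cancel_left, norm_smul, Real.norm_eq_abs,
        abs_of_pos ht.1]
      calc t * ‖w‖ ≤ t * (‖w‖ + 1) := by nlinarith [ht.1]
        _ < (ε / (‖w‖ + 1)) * (‖w‖ + 1) := by
            apply mul_lt_mul_of_pos_right ht.2 (by positivity)
        _ = ε := by field_simp
    have := hp _ hmem
    rw [add_sub_cancel_left, real_inner_smul_right] at this
    rw [div_le_iff₀ ht.1]
    linarith
  have hzero : ∀ w : H, ⟪p - gradient u x, w⟫_ℝ = 0 := by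
    intro w
    have h1 := key w
    have h2 := key (-w)
    rw [inner_neg_right, inner_neg_right] at h2
    rw [inner_sub_left]
    linarith
  have := hzero (p - gradient u x)
  rw [inner_self_eq_zero] at this
  rw [sub_eq_zero] at this
  exact this

variable [FiniteDimensional ℝ H] [MeasurableSpace H] [BorelSpace H]

/-- A concave function bounded between 0 and M on an open set is a.e. differentiable there. -/
lemma CMaux.concave_ae_diff (μ : Measure H) [μ.IsAddHaarMeasure] {Ω : Set H} (hΩo : IsOpen Ω)
    {M : ℝ} {v : H → ℝ} (hv : ConcaveOn ℝ Ω v)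
    (h0 : ∀ x ∈ Ω, 0 ≤ v x) (hMv : ∀ x ∈ Ω, v x ≤ M) :
    ∀ᵐ x ∂μ, x ∈ Ω → DifferentiableAt ℝ v x := by
  obtain ⟨D₀, hD₀c, hD₀d⟩ := TopologicalSpace.exists_countable_dense ↥Ω
  have : Countable ↥D₀ := hD₀c.to_subtype
  have Hae : ∀ p : ↥D₀ × ℚ, ∀ᵐ x ∂μ,
      ((0:ℝ) < (p.2:ℝ) ∧ ball ((p.1 : ↥Ω) : H) (2*(p.2:ℝ)) ⊆ Ω) →
      (x ∈ ball ((p.1 : ↥Ω) : H) (p.2:ℝ) → DifferentiableAt ℝ v x) := by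
    rintro ⟨d, q⟩
    by_cases hcond : (0:ℝ) < (q:ℝ) ∧ ball ((d : ↥Ω) : H) (2*(q:ℝ)) ⊆ Ω
    · obtain ⟨hq, hball⟩ := hcond
      set c : H := ((d : ↥Ω) : H)
      have hcΩ : c ∈ Ω := hball (by rw [mem_ball, dist_self]; linarith)
      have hM0 : 0 ≤ M := le_trans (h0 _ hcΩ) (hMv _ hcΩ)
      have hlip : LipschitzOnWith (Real.toNNReal (M / (q:ℝ))) v (ball c (q:ℝ)) := by
        rw [lipschitzOnWith_iff_dist_le_mul]
        intro x hx y hy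
        rw [Real.dist_eq, Real.coe_toNNReal _ (by positivity), dist_eq_norm]
        rw [abs_sub_le_iff]
        constructor
        · exact CMaux.concave_lip hv h0 hMv hq hball hx hy
        · rw [norm_sub_rev]
          exact CMaux.concave_lip hv h0 hMv hq hball hy hx
      filter_upwards [hlip.ae_differentiableWithinAt_of_mem (μ := μ)] with x hx _ hxball
      exact (hx hxball).differentiableAt (isOpen_ball.mem_nhds hxball)
    · exact Eventually.of_forall (fun x h => (hcond h).elim)
  filter_upwards [ae_all_iff.2 Hae] with x hx hxΩ
  obtain ⟨ε, hε, hballε⟩ := Metric.isOpen_iff.1 hΩo x hxΩ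
  obtain ⟨q, hq0, hqε⟩ := exists_rat_btwn (show (0:ℝ) < ε/3 by positivity)
  have : (⟨x, hxΩ⟩ : ↥Ω) ∈ closure D₀ := by rw [hD₀d.closure_eq]; trivial
  obtain ⟨dd, hdD, hddist⟩ := Metric.mem_closure_iff.1 this (q:ℝ) hq0
  have hdist : dist x ((dd : ↥Ω) : H) < (q:ℝ) := by
    rwa [Subtype.dist_eq] at hddist
  refine hx (⟨dd, hdD⟩, q) ⟨hq0, ?_⟩ (by simpa [mem_ball] using hdist)
  intro y hy
  apply hballε
  rw [mem_ball] at hy ⊢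
  calc dist y x ≤ dist y ((dd : ↥Ω) : H) + dist ((dd : ↥Ω) : H) x := dist_triangle _ _ _
    _ < 2*(q:ℝ) + (q:ℝ) := by rw [dist_comm ((dd : ↥Ω) : H) x]; linarith
    _ < ε := by linarith

/-- Gradients of a pointwise-converging sequence of concave functions converge at points of
differentiability. -/
lemma CMaux.gradient_tendsto_of_concave [CompleteSpace H] {Ω : Set H} (hΩo : IsOpen Ω) {M : ℝ}
    {uu : ℕ → H → ℝ} {u : H → ℝ}
    (hcc : ∀ n, ConcaveOn ℝ Ω (uu n)) (h0 : ∀ n, ∀ x ∈ Ω, 0 ≤ uu n x)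
    (hMb : ∀ n, ∀ x ∈ Ω, uu n x ≤ M)
    (hulim : ∀ x ∈ Ω, Tendsto (fun n => uu n x) atTop (𝓝 (u x)))
    {x : H} (hx : x ∈ Ω) (hdu : DifferentiableAt ℝ u x)
    (hdn : ∀ n, DifferentiableAt ℝ (uu n) x) :
    Tendsto (fun n => gradient (uu n) x) atTop (𝓝 (gradient u x)) := by
  obtain ⟨r, hr, hball⟩ := Metric.isOpen_iff.1 hΩo x hx
  have hbnd : ∀ n, gradient (uu n) x ∈ closedBall (0:H) (2*M/r) := by
    intro n
    rw [mem_closedBall, dist_eq_norm, sub_zero]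
    exact CMaux.concave_grad_bound (hcc n) (h0 n) (hMb n) hx hr hball
  apply tendsto_of_subseq_tendsto
  intro ns hns
  obtain ⟨p, -, ms, hms, hplim⟩ :=
    tendsto_subseq_of_bounded (isBounded_closedBall (x := (0:H)) (r := 2*M/r))
      (fun n => hbnd (ns n))
  have hcomp : Tendsto (fun n => ns (ms n)) atTop atTop := hns.comp hms.tendsto_atTop
  have hp : ∀ y ∈ Ω, u y ≤ u x + ⟪p, y - x⟫_ℝ := by
    intro y hy
    refine le_of_tendsto_of_tendsto' ((hulim y hy).comp hcomp)
      (((hulim x hx).comp hcomp).add ((hplim.inner tendsto_const_nhds))) ?_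
    intro n
    exact CMaux.concave_subgrad (hcc _) hx (hdn _) hy
  have := CMaux.subgrad_eq_gradient hΩo hx hdu hp
  exact ⟨ms, by rw [← this]; exact hplim⟩

/-- Lower semicontinuity gives the liminf inequality along converging sequences. -/
lemma CMaux.lsc_le_liminf {X : Type*} [TopologicalSpace X] {f : X → ENNReal}
    (hf : LowerSemicontinuous f) {q : ℕ → X} {q₀ : X} (hq : Tendsto q atTop (𝓝 q₀)) :
    f q₀ ≤ Filter.liminf (fun n => f (q n)) Filter.atTop := by
  have h1 : f q₀ ≤ Filter.liminf f (𝓝 q₀) := LowerSemicontinuousAt.le_liminf (hf q₀)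
  have h2 : Filter.liminf f (𝓝 q₀) ≤ Filter.liminf f (Filter.map q Filter.atTop) :=
    Filter.liminf_le_liminf_of_le hq
  have h3 : Filter.liminf f (Filter.map q Filter.atTop)
      = Filter.liminf (fun n => f (q n)) Filter.atTop := by
    rw [Filter.liminf, Filter.liminf, Filter.map_map]
    rfl
  rw [h3] at h2
  exact h1.trans h2

end AuxCM

/-- Existence of minimizers in the class `C_M` (concave functions with `0 ≤ u ≤ M` on a bounded
open convex set `Ω ⊂ ℝ^d`) for integral functionals `∫_Ω φ(x, u, ∇u) dx` with `φ ≥ 0`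
measurable for the product of the Lebesgue σ-algebra and the Borel σ-algebras, and such that
`φ(x, ·, ·)` is lower semicontinuous for a.e. `x ∈ Ω`. -/
theorem exists_minimizer_in_CM (d : ℕ) (Ω : Set (EuclideanSpace ℝ (Fin d)))
    (hΩne : Ω.Nonempty) (hΩo : IsOpen Ω) (hΩb : Bornology.IsBounded Ω)
    (hΩconv : Convex ℝ Ω) (M : ℝ) (hM : 0 < M)
    (φ : EuclideanSpace ℝ (Fin d) → ℝ → EuclideanSpace ℝ (Fin d) → ENNReal)
    (hmeas : @Measurable
      (MeasureTheory.NullMeasurableSpace (EuclideanSpace ℝ (Fin d)) volume ×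
        ℝ × EuclideanSpace ℝ (Fin d)) ENNReal _ _
      (fun p => φ p.1 p.2.1 p.2.2))
    (hlsc : ∀ᵐ x ∂(volume.restrict Ω),
      LowerSemicontinuous (fun q : ℝ × EuclideanSpace ℝ (Fin d) => φ x q.1 q.2)) :
    ∃ u : EuclideanSpace ℝ (Fin d) → ℝ,
      (ConcaveOn ℝ Ω u ∧ ∀ x ∈ Ω, 0 ≤ u x ∧ u x ≤ M) ∧
      ∀ v : EuclideanSpace ℝ (Fin d) → ℝ,
        (ConcaveOn ℝ Ω v ∧ ∀ x ∈ Ω, 0 ≤ v x ∧ v x ≤ M) →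
        ∫⁻ x in Ω, φ x (u x) (gradient u x) ≤ ∫⁻ x in Ω, φ x (v x) (gradient v x) := by
  classical
  set P : (EuclideanSpace ℝ (Fin d) → ℝ) → Prop :=
    fun v => ConcaveOn ℝ Ω v ∧ ∀ x ∈ Ω, 0 ≤ v x ∧ v x ≤ M with hPdef
  set J : (EuclideanSpace ℝ (Fin d) → ℝ) → ENNReal :=
    fun v => ∫⁻ x in Ω, φ x (v x) (gradient v x) with hJdef
  -- measurability of gradients and of the integrands
  have hgradmeas : ∀ v : EuclideanSpace ℝ (Fin d) → ℝ, Measurable (fun x => gradient v x) :=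
    fun v => (InnerProductSpace.toDual ℝ _).toContinuousLinearEquiv.symm.continuous.measurable.comp
      (measurable_fderiv ℝ v)
  have haemeas : ∀ v : EuclideanSpace ℝ (Fin d) → ℝ, Measurable v →
      AEMeasurable (fun x => φ x (v x) (gradient v x)) (volume.restrict Ω) := by
    intro v hv
    have hle : (inferInstance : MeasurableSpace (EuclideanSpace ℝ (Fin d))) ≤
        (inferInstance :
          MeasurableSpace (NullMeasurableSpace (EuclideanSpace ℝ (Fin d)) volume)) :=
      fun s hs => hs.nullMeasurableSet
    have hT : @Measurable (NullMeasurableSpace (EuclideanSpace ℝ (Fin d)) volume)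
        (NullMeasurableSpace (EuclideanSpace ℝ (Fin d)) volume × ℝ × EuclideanSpace ℝ (Fin d))
        _ _ (fun x => (x, v x, gradient v x)) :=
      Measurable.prodMk measurable_id
        (Measurable.prodMk (hv.mono hle le_rfl) (((hgradmeas v)).mono hle le_rfl))
    have hnm : NullMeasurable (fun x => φ x (v x) (gradient v x)) volume := hmeas.comp hT
    exact hnm.aemeasurable.restrict
  -- the functional and the class are invariant under restriction to Ω
  have hgrad_ind : ∀ (v : EuclideanSpace ℝ (Fin d) → ℝ), ∀ x ∈ Ω,
      gradient (Ω.indicator v) x = gradient v x := by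
    intro v x hx
    apply Filter.EventuallyEq.gradient_eq
    filter_upwards [hΩo.mem_nhds hx] with y hy
    exact Set.indicator_of_mem hy v
  have hJ_ind : ∀ v, J (Ω.indicator v) = J v := by
    intro v
    apply setLIntegral_congr_fun hΩo.measurableSet
    intro x hx
    beta_reduce
    rw [Set.indicator_of_mem hx, hgrad_ind v x hx]
  have hP_ind : ∀ v, P v → P (Ω.indicator v) := by
    intro v hv
    refine ⟨⟨hΩconv, ?_⟩, ?_⟩
    · intro x hx y hy a b ha hb hab
      have hxy : a • x + b • y ∈ Ω := hΩconv hx hy ha hb hab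
      rw [Set.indicator_of_mem hx, Set.indicator_of_mem hy, Set.indicator_of_mem hxy]
      exact hv.1.2 hx hy ha hb hab
    · intro x hx
      rw [Set.indicator_of_mem hx]; exact hv.2 x hx
  have hind_meas : ∀ v : EuclideanSpace ℝ (Fin d) → ℝ, P v → Measurable (Ω.indicator v) := by
    intro v hv
    rw [← Set.piecewise_eq_indicator]
    exact ContinuousOn.measurable_piecewise (hv.1.continuousOn hΩo)
      continuousOn_const hΩo.measurableSet
  -- a minimizing sequence
  have hPzero : P (fun _ => 0) := ⟨concaveOn_const 0 hΩconv, fun x hx => ⟨le_refl 0, hM.le⟩⟩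
  have hSne : (J '' {v | P v}).Nonempty := ⟨J (fun _ => 0), ⟨_, hPzero, rfl⟩⟩
  obtain ⟨seq, -, hseqlim, hseqmem⟩ := exists_seq_tendsto_sInf hSne (OrderBot.bddBelow _)
  choose w hPw hJw using hseqmem
  set u0 : ℕ → EuclideanSpace ℝ (Fin d) → ℝ := fun n => Ω.indicator (w n) with hu0def
  have hPu0 : ∀ n, P (u0 n) := fun n => hP_ind _ (hPw n)
  have hJu0 : ∀ n, J (u0 n) = seq n := fun n => (hJ_ind (w n)).trans (hJw n)
  have hu0meas : ∀ n, Measurable (u0 n) := fun n => hind_meas _ (hPw n)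
  -- extraction of a pointwise converging subsequence: first on a countable dense set
  obtain ⟨D₀, hD₀c, hD₀d⟩ := TopologicalSpace.exists_countable_dense ↥Ω
  haveI : Countable ↥D₀ := hD₀c.to_subtype
  haveI : CompactSpace ↥(Set.Icc (0:ℝ) M) := isCompact_iff_compactSpace.mp isCompact_Icc
  have hmemIcc : ∀ (n : ℕ) (dd : ↥D₀),
      u0 n (((dd : ↥Ω) : EuclideanSpace ℝ (Fin d))) ∈ Set.Icc (0:ℝ) M := by
    intro n dd
    have h := (hPu0 n).2 _ (dd : ↥Ω).2
    exact ⟨h.1, h.2⟩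
  set F : ℕ → (↥D₀ → ↥(Set.Icc (0:ℝ) M)) :=
    fun n dd => ⟨u0 n (((dd : ↥Ω) : EuclideanSpace ℝ (Fin d))), hmemIcc n dd⟩ with hFdef
  obtain ⟨g, -, ψ, hψmono, hFg⟩ :=
    IsCompact.tendsto_subseq (isCompact_univ (X := ↥D₀ → ↥(Set.Icc (0:ℝ) M)))
      (fun n => Set.mem_univ (F n))
  set uu : ℕ → EuclideanSpace ℝ (Fin d) → ℝ := fun n => u0 (ψ n) with huudef
  have hPuu : ∀ n, P (uu n) := fun n => hPu0 (ψ n)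
  have hlimD : ∀ dd : ↥D₀,
      Tendsto (fun n => uu n (((dd : ↥Ω) : EuclideanSpace ℝ (Fin d)))) atTop
        (𝓝 ((g dd : ℝ))) := by
    intro dd
    have h1 : Tendsto (fun n => F (ψ n) dd) atTop (𝓝 (g dd)) := tendsto_pi_nhds.mp hFg dd
    exact (continuous_subtype_val.tendsto (g dd)).comp h1
  -- convergence at every point of Ω, by an equi-Lipschitz + density argument
  have key : ∀ x, x ∈ Ω → ∃ l, Tendsto (fun n => uu n x) atTop (𝓝 l) := by
    intro x hx
    apply cauchySeq_tendsto_of_complete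
    obtain ⟨ε₀, hε₀, hball₀⟩ := Metric.isOpen_iff.1 hΩo x hx
    have hr : (0:ℝ) < ε₀/2 := by positivity
    have hball : Metric.ball x (2*(ε₀/2)) ⊆ Ω := by
      intro y hy; apply hball₀; rw [Metric.mem_ball] at hy ⊢; linarith
    set L := M / (ε₀/2) with hLdef
    have hL0 : 0 < L := by positivity
    rw [Metric.cauchySeq_iff]
    intro ε hε
    set δ := min (ε₀/4) (ε/(4*L)) with hδdef
    have hδ0 : 0 < δ := lt_min (by positivity) (by positivity)
    have hclosure : (⟨x, hx⟩ : ↥Ω) ∈ closure D₀ := by rw [hD₀d.closure_eq]; trivial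
    obtain ⟨dd, hdD, hddist⟩ := Metric.mem_closure_iff.1 hclosure δ hδ0
    set dv : EuclideanSpace ℝ (Fin d) := ((dd : ↥Ω) : EuclideanSpace ℝ (Fin d)) with hdvdef
    have hdist : dist x dv < δ := by rwa [Subtype.dist_eq] at hddist
    have hdmem : dv ∈ Metric.ball x (ε₀/2) := by
      rw [Metric.mem_ball, dist_comm]
      exact hdist.trans_le ((min_le_left _ _).trans (by linarith))
    have hxmem : x ∈ Metric.ball x (ε₀/2) := Metric.mem_ball_self hr
    have hnear : ∀ n, dist (uu n x) (uu n dv) ≤ ε/4 := by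
      intro n
      have hlip1 := CMaux.concave_lip (hPuu n).1 (fun z hz => ((hPuu n).2 z hz).1)
        (fun z hz => ((hPuu n).2 z hz).2) hr hball hxmem hdmem
      have hlip2 := CMaux.concave_lip (hPuu n).1 (fun z hz => ((hPuu n).2 z hz).1)
        (fun z hz => ((hPuu n).2 z hz).2) hr hball hdmem hxmem
      have hnd : ‖x - dv‖ ≤ δ := by rw [← dist_eq_norm]; exact hdist.le
      have hnd2 : ‖dv - x‖ ≤ δ := by rw [norm_sub_rev]; exact hnd
      have hLδ : L * δ ≤ ε/4 := by
        have : δ ≤ ε/(4*L) := min_le_right _ _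
        calc L * δ ≤ L * (ε/(4*L)) := mul_le_mul_of_nonneg_left this hL0.le
          _ = ε/4 := by field_simp
      rw [Real.dist_eq, abs_sub_le_iff]
      constructor
      · calc uu n x - uu n dv ≤ L * ‖x - dv‖ := hlip1
          _ ≤ L * δ := mul_le_mul_of_nonneg_left hnd hL0.le
          _ ≤ ε/4 := hLδ
      · calc uu n dv - uu n x ≤ L * ‖dv - x‖ := hlip2
          _ ≤ L * δ := mul_le_mul_of_nonneg_left hnd2 hL0.le
          _ ≤ ε/4 := hLδ
    have hcauchyD : CauchySeq (fun n => uu n dv) := (hlimD ⟨dd, hdD⟩).cauchySeq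
    rw [Metric.cauchySeq_iff] at hcauchyD
    obtain ⟨N, hN⟩ := hcauchyD (ε/4) (by positivity)
    refine ⟨N, fun m hm n hn => ?_⟩
    have htri : dist (uu m x) (uu n x) ≤
        dist (uu m x) (uu m dv) + dist (uu m dv) (uu n dv) + dist (uu n dv) (uu n x) :=
      dist_triangle4 _ _ _ _
    have h1 := hnear m
    have h2 := hN m hm n hn
    have h3 : dist (uu n dv) (uu n x) ≤ ε/4 := by rw [dist_comm]; exact hnear n
    calc dist (uu m x) (uu n x) ≤ _ := htri
      _ < ε := by linarith
  -- the limit function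
  set u : EuclideanSpace ℝ (Fin d) → ℝ :=
    fun x => if h : x ∈ Ω then (key x h).choose else 0 with hudef
  have hulim : ∀ x, x ∈ Ω → Tendsto (fun n => uu n x) atTop (𝓝 (u x)) := by
    intro x hx
    have hux : u x = (key x hx).choose := by rw [hudef]; simp [hx]
    rw [hux]
    exact (key x hx).choose_spec
  have hPu : P u := by
    constructor
    · refine ⟨hΩconv, ?_⟩
      intro x hx y hy a b ha hb hab
      have hxy : a • x + b • y ∈ Ω := hΩconv hx hy ha hb hab
      have h1 : Tendsto (fun n => a * uu n x + b * uu n y) atTop (𝓝 (a * u x + b * u y)) :=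
        ((hulim x hx).const_mul a).add ((hulim y hy).const_mul b)
      have h2 := hulim _ hxy
      have h3 := le_of_tendsto_of_tendsto' h1 h2 (fun n => by
        have := (hPuu n).1.2 hx hy ha hb hab
        simpa [smul_eq_mul] using this)
      simpa [smul_eq_mul] using h3
    · intro x hx
      constructor
      · exact ge_of_tendsto (hulim x hx) (Eventually.of_forall fun n => ((hPuu n).2 x hx).1)
      · exact le_of_tendsto (hulim x hx) (Eventually.of_forall fun n => ((hPuu n).2 x hx).2)
  -- almost everywhere differentiability and convergence of gradients
  have hdiff_uu : ∀ᵐ x ∂(volume : Measure (EuclideanSpace ℝ (Fin d))), x ∈ Ω →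
      (DifferentiableAt ℝ u x ∧ ∀ n, DifferentiableAt ℝ (uu n) x) := by
    have h1 := CMaux.concave_ae_diff volume hΩo hPu.1 (fun x hx => (hPu.2 x hx).1)
      (fun x hx => (hPu.2 x hx).2)
    have h2 : ∀ᵐ x ∂(volume : Measure (EuclideanSpace ℝ (Fin d))),
        ∀ n, x ∈ Ω → DifferentiableAt ℝ (uu n) x :=
      ae_all_iff.2 (fun n => CMaux.concave_ae_diff volume hΩo (hPuu n).1
        (fun x hx => ((hPuu n).2 x hx).1) (fun x hx => ((hPuu n).2 x hx).2))
    filter_upwards [h1, h2] with x hx1 hx2 hxΩ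
    exact ⟨hx1 hxΩ, fun n => hx2 n hxΩ⟩
  have hconv_pair : ∀ᵐ x ∂(volume.restrict Ω),
      Tendsto (fun n => ((uu n x : ℝ), gradient (uu n) x)) atTop (𝓝 (u x, gradient u x)) := by
    rw [ae_restrict_iff' hΩo.measurableSet]
    filter_upwards [hdiff_uu] with x hdx hxΩ
    refine Tendsto.prodMk_nhds (hulim x hxΩ) ?_
    exact CMaux.gradient_tendsto_of_concave hΩo (fun n => (hPuu n).1)
      (fun n z hz => ((hPuu n).2 z hz).1) (fun n z hz => ((hPuu n).2 z hz).2)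
      (fun z hz => hulim z hz) hxΩ (hdx hxΩ).1 ((hdx hxΩ).2)
  -- lower semicontinuity and Fatou
  have hliminf : J u ≤ liminf (fun n => J (uu n)) atTop := by
    have step1 : J u ≤ ∫⁻ x in Ω, liminf (fun n => φ x (uu n x) (gradient (uu n) x)) atTop := by
      apply lintegral_mono_ae
      filter_upwards [hlsc, hconv_pair] with x hx1 hx2
      exact CMaux.lsc_le_liminf hx1 hx2
    refine step1.trans ?_
    exact lintegral_liminf_le' (fun n => haemeas (uu n) (hu0meas (ψ n)))
  have hJlim : Tendsto (fun n => J (uu n)) atTop (𝓝 (sInf (J '' {v | P v}))) := by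
    have heq : (fun n => J (uu n)) = (fun n => seq (ψ n)) := funext fun n => hJu0 (ψ n)
    rw [heq]
    exact hseqlim.comp hψmono.tendsto_atTop
  have hfinal : J u ≤ sInf (J '' {v | P v}) := by
    rw [← hJlim.liminf_eq]; exact hliminf
  exact ⟨u, hPu, fun v hv => hfinal.trans (sInf_le ⟨v, hv, rfl⟩)⟩
end

section
/- For every M > 0, Newton's minimal resistance problem min { F(u) : u ∈ C_M } admits at least one solution: there exists u ∈ C_M such that F(u) ≤ F(v) for every v ∈ C_M, where F(u) = ∫_Ω 1/(1 + |∇u(x)|²) dx. -/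
open Filter MeasureTheory Topology Metric Set
open scoped RealInnerProductSpace ENNReal NNReal

section NewtonAux

variable {E : Type*} [NormedAddCommGroup E] [InnerProductSpace ℝ E] [CompleteSpace E]

/-- One-sided directional derivative limit from a gradient. -/
theorem newton_tendsto_slope_dir {v : E → ℝ} {p x : E} (hv : HasGradientAt v p x) (w : E) :
    Tendsto (fun t : ℝ => (v (x + t • w) - v x) / t) (𝓝[>] (0 : ℝ)) (𝓝 ⟪p, w⟫) := by
  have hline : HasDerivAt (fun t : ℝ => x + t • w) w (0 : ℝ) := by
    simpa using ((hasDerivAt_id (0 : ℝ)).smul_const w).const_add x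
  have hvf : HasFDerivAt v (InnerProductSpace.toDual ℝ E p) ((fun t : ℝ => x + t • w) 0) := by
    simpa using hv.hasFDerivAt
  have hφ : HasDerivAt (fun t : ℝ => v (x + t • w)) ⟪p, w⟫ 0 := by
    simpa [InnerProductSpace.toDual_apply_apply, Function.comp_def] using hvf.comp_hasDerivAt 0 hline
  have h1 : Tendsto (slope (fun t : ℝ => v (x + t • w)) 0) (𝓝[≠] (0 : ℝ)) (𝓝 ⟪p, w⟫) :=
    hasDerivAt_iff_tendsto_slope.1 hφ
  have h2 : Tendsto (slope (fun t : ℝ => v (x + t • w)) 0) (𝓝[>] (0 : ℝ)) (𝓝 ⟪p, w⟫) :=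
    h1.mono_left (nhdsWithin_mono _ (fun t ht => ne_of_gt ht))
  refine h2.congr (fun t => ?_)
  simp [slope_def_field]

/-- Supergradient inequality for a concave function at a differentiability point. -/
theorem newton_concave_le_grad {Ω : Set E} {v : E → ℝ}
    (hv : ConcaveOn ℝ Ω v) {x y : E} (hx : x ∈ Ω) (hy : y ∈ Ω) {p : E}
    (hp : HasGradientAt v p x) : v y ≤ v x + ⟪p, y - x⟫ := by
  have key := newton_tendsto_slope_dir hp (y - x)
  have hev : ∀ᶠ t : ℝ in 𝓝[>] (0 : ℝ), v y - v x ≤ (v (x + t • (y - x)) - v x) / t := by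
    filter_upwards [Ioo_mem_nhdsGT_of_mem (by constructor <;> norm_num : (0:ℝ) ∈ Ico (0:ℝ) 1)]
      with t ht
    have hcomb : (1 - t) • v x + t • v y ≤ v ((1 - t) • x + t • y) :=
      hv.2 hx hy (by linarith [ht.2]) (le_of_lt ht.1) (by ring)
    have hxt : (1 - t) • x + t • y = x + t • (y - x) := by
      rw [sub_smul, smul_sub, one_smul]; abel
    rw [hxt] at hcomb
    rw [le_div_iff₀ ht.1]
    simp only [smul_eq_mul] at hcomb
    nlinarith
  have := ge_of_tendsto key hev
  linarith

/-- Identification of a supergradient with the gradient at a differentiability point. -/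
theorem newton_grad_eq_of_supergrad {Ω : Set E} {u : E → ℝ} {x a q : E} {r : ℝ} (hr : 0 < r)
    (hball : ball x r ⊆ Ω) (hq : HasGradientAt u q x)
    (ha : ∀ y ∈ Ω, u y ≤ u x + ⟪a, y - x⟫) : a = q := by
  have h1 : ∀ w : E, ⟪q, w⟫ ≤ ⟪a, w⟫ := by
    intro w
    have key := newton_tendsto_slope_dir hq w
    have hδ : 0 < r / (‖w‖ + 1) := by positivity
    have hev : ∀ᶠ t : ℝ in 𝓝[>] (0 : ℝ), (u (x + t • w) - u x) / t ≤ ⟪a, w⟫ := by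
      filter_upwards [Ioo_mem_nhdsGT_of_mem
        (⟨le_refl 0, hδ⟩ : (0:ℝ) ∈ Ico (0:ℝ) (r / (‖w‖ + 1)))] with t ht
      have hmem : x + t • w ∈ Ω := by
        apply hball
        rw [mem_ball_iff_norm]
        have : ‖x + t • w - x‖ = t * ‖w‖ := by
          simp [norm_smul, abs_of_pos ht.1]
        rw [this]
        have h2 : t * ‖w‖ < (r / (‖w‖ + 1)) * (‖w‖ + 1) := by
          have hw1 : (0:ℝ) < ‖w‖ + 1 := by positivity
          calc t * ‖w‖ ≤ t * (‖w‖ + 1) := by nlinarith [ht.1]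
            _ < (r / (‖w‖ + 1)) * (‖w‖ + 1) := by
                exact mul_lt_mul_of_pos_right ht.2 hw1
        rwa [div_mul_cancel₀ r (by positivity : (‖w‖ + 1) ≠ 0)] at h2
      have := ha _ hmem
      rw [div_le_iff₀ ht.1]
      have hinner : ⟪a, x + t • w - x⟫ = t * ⟪a, w⟫ := by
        simp [real_inner_smul_right]
      rw [hinner] at this
      linarith [this]
    exact le_of_tendsto key hev
  have h2 : ∀ w : E, ⟪q - a, w⟫ ≤ 0 := by
    intro w
    rw [inner_sub_left]
    linarith [h1 w]
  have h3 := h2 (q - a)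
  have h4 : q - a = 0 := by
    have := real_inner_self_nonneg (x := q - a)
    have h5 : ⟪q - a, q - a⟫ = 0 := le_antisymm h3 this
    exact inner_self_eq_zero.1 h5
  have : q = a := by rwa [sub_eq_zero] at h4
  exact this.symm

/-- Gradient bound for bounded concave functions. -/
theorem newton_grad_norm_le {Ω : Set E} {v : E → ℝ} (hv : ConcaveOn ℝ Ω v)
    {M r : ℝ} (hbd : ∀ z ∈ Ω, 0 ≤ v z ∧ v z ≤ M) {x p : E} (hx : x ∈ Ω) (hr : 0 < r)
    (hball : closedBall x r ⊆ Ω) (hp : HasGradientAt v p x) : ‖p‖ ≤ M / r := by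
  have hM0 : 0 ≤ M := le_trans (hbd x hx).1 (hbd x hx).2
  rcases eq_or_ne p 0 with rfl | hp0
  · simpa using div_nonneg hM0 hr.le
  · have hpnorm : 0 < ‖p‖ := norm_pos_iff.2 hp0
    set y := x - (r / ‖p‖) • p with hy
    have hymem : y ∈ Ω := by
      apply hball
      rw [mem_closedBall_iff_norm]
      have : ‖y - x‖ = r := by
        rw [hy]
        rw [sub_sub_cancel_left, norm_neg, norm_smul, Real.norm_eq_abs]
        rw [abs_of_pos (by positivity), div_mul_cancel₀ r hpnorm.ne']
      rw [this]
    have hineq := newton_concave_le_grad hv hx hymem hp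
    have hinner : ⟪p, y - x⟫ = -(r * ‖p‖) := by
      rw [hy, sub_sub_cancel_left, inner_neg_right, real_inner_smul_right,
        real_inner_self_eq_norm_mul_norm]
      field_simp
    rw [hinner] at hineq
    have h1 := (hbd y hymem).1
    have h2 := (hbd x hx).2
    rw [le_div_iff₀ hr]
    nlinarith

/-- A.e. pointwise convergence of gradients for concave functions converging pointwise. -/
theorem newton_grad_tendsto {Ω : Set E} [FiniteDimensional ℝ E] {M : ℝ}
    {v : ℕ → E → ℝ} {u : E → ℝ}
    (hvconc : ∀ n, ConcaveOn ℝ Ω (v n)) (hvbd : ∀ n, ∀ z ∈ Ω, 0 ≤ v n z ∧ v n z ≤ M)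
    (hpt : ∀ z ∈ Ω, Tendsto (fun n => v n z) atTop (𝓝 (u z)))
    {x : E} (hx : x ∈ Ω) {r : ℝ} (hr : 0 < r) (hball : closedBall x r ⊆ Ω)
    (hdv : ∀ n, DifferentiableAt ℝ (v n) x) (hdu : DifferentiableAt ℝ u x) :
    Tendsto (fun n => gradient (v n) x) atTop (𝓝 (gradient u x)) := by
  apply tendsto_of_subseq_tendsto
  intro ns hns
  have hbd : ∀ n, gradient (v n) x ∈ closedBall (0 : E) (M / r) := fun n =>
    mem_closedBall_zero_iff.2
      (newton_grad_norm_le (hvconc n) (hvbd n) hx hr hball (hdv n).hasGradientAt)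
  obtain ⟨a, -, ms, hms, hta⟩ :=
    tendsto_subseq_of_bounded (Metric.isBounded_closedBall (x := (0:E)) (r := M / r))
      (fun k => hbd (ns k))
  refine ⟨ms, ?_⟩
  have hcomp : Tendsto (fun k => ns (ms k)) atTop atTop := hns.comp hms.tendsto_atTop
  have ha : ∀ y ∈ Ω, u y ≤ u x + ⟪a, y - x⟫ := by
    intro y hy
    have hle : ∀ k, v (ns (ms k)) y ≤ v (ns (ms k)) x + ⟪gradient (v (ns (ms k))) x, y - x⟫ :=
      fun k => newton_concave_le_grad (hvconc _) hx hy (hdv _).hasGradientAt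
    have t1 : Tendsto (fun k => v (ns (ms k)) y) atTop (𝓝 (u y)) := (hpt y hy).comp hcomp
    have t2 : Tendsto (fun k => v (ns (ms k)) x + ⟪gradient (v (ns (ms k))) x, y - x⟫)
        atTop (𝓝 (u x + ⟪a, y - x⟫)) :=
      ((hpt x hx).comp hcomp).add (hta.inner tendsto_const_nhds)
    exact le_of_tendsto_of_tendsto' t1 t2 hle
  have haq : a = gradient u x :=
    newton_grad_eq_of_supergrad hr (fun z hz => hball (ball_subset_closedBall hz))
      hdu.hasGradientAt ha
  exact haq ▸ hta

open MeasureTheory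

/-- A bounded concave function on an open set is a.e. differentiable there. -/
theorem newton_ae_diff {d : ℕ} {Ω : Set (EuclideanSpace ℝ (Fin d))}
    (hΩo : IsOpen Ω) {M : ℝ} {v : EuclideanSpace ℝ (Fin d) → ℝ}
    (hv : ConcaveOn ℝ Ω v) (hbd : ∀ z ∈ Ω, 0 ≤ v z ∧ v z ≤ M) :
    ∀ᵐ x, x ∈ Ω → DifferentiableAt ℝ v x := by
  have hrad : ∀ x : ↥Ω, ∃ r : ℝ, 0 < r ∧ ball (x : EuclideanSpace ℝ (Fin d)) (3 * r) ⊆ Ω := by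
    intro x
    obtain ⟨ε, hε, hsub⟩ := Metric.isOpen_iff.1 hΩo x x.2
    refine ⟨ε / 3, by linarith, fun z hz => hsub ?_⟩
    rw [mem_ball] at hz ⊢
    linarith [hz]
  choose r hr hsub using hrad
  obtain ⟨T, hTc, hTU⟩ := TopologicalSpace.isOpen_iUnion_countable
    (fun x : ↥Ω => ball (x : EuclideanSpace ℝ (Fin d)) (r x)) (fun x => isOpen_ball)
  have hcover : Ω ⊆ ⋃ i ∈ T, ball (i : EuclideanSpace ℝ (Fin d)) (r i) := by
    rw [hTU]
    intro x hx
    exact mem_iUnion.2 ⟨⟨x, hx⟩, mem_ball_self (hr _)⟩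
  have hlip : ∀ i : ↥Ω,
      LipschitzOnWith (2 * M / (2 * r i)).toNNReal v
        (ball (i : EuclideanSpace ℝ (Fin d)) (r i)) := by
    intro i
    have h1 : ConcaveOn ℝ (ball (i : EuclideanSpace ℝ (Fin d)) (3 * r i)) v :=
      hv.subset (hsub i) (convex_ball _ _)
    have h2 : ∀ a, dist a (i : EuclideanSpace ℝ (Fin d)) < 3 * r i → |v a| ≤ M := by
      intro a ha
      have haΩ : a ∈ Ω := hsub i (mem_ball.2 ha)
      obtain ⟨h0, hM'⟩ := hbd a haΩ
      rw [abs_le]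
      exact ⟨by linarith, hM'⟩
    have := h1.lipschitzOnWith_of_abs_le (by linarith [hr i] : (0:ℝ) < 2 * r i) h2
    rwa [show 3 * r i - 2 * r i = r i by ring] at this
  have hae : ∀ i : ↥Ω, ∀ᵐ x, x ∈ ball (i : EuclideanSpace ℝ (Fin d)) (r i) →
      DifferentiableAt ℝ v x := by
    intro i
    filter_upwards [(hlip i).ae_differentiableWithinAt_of_mem] with x hx hmem
    exact (hx hmem).differentiableAt (isOpen_ball.mem_nhds hmem)
  have hT := (MeasureTheory.ae_ball_iff hTc).2 (fun i _ => hae i)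
  filter_upwards [hT] with x hx hxΩ
  obtain ⟨i, hiT, hib⟩ := mem_iUnion₂.1 (hcover hxΩ)
  exact hx i hiT hib

/-- Measurability of the resistance integrand. -/
theorem newton_meas_integrand {d : ℕ} (v : EuclideanSpace ℝ (Fin d) → ℝ) :
    Measurable (fun x => ENNReal.ofReal (1 / (1 + ‖gradient v x‖ ^ 2))) := by
  have h1 : Measurable (fun x => gradient v x) := by
    have : Measurable (fderiv ℝ v) := measurable_fderiv ℝ v
    exact ((InnerProductSpace.toDual ℝ
      (EuclideanSpace ℝ (Fin d))).symm.continuous.measurable).comp this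
  have h2 : Measurable (fun x => (1 : ℝ) / (1 + ‖gradient v x‖ ^ 2)) :=
    measurable_const.div ((measurable_const.add ((h1.norm).pow_const 2)))
  exact ENNReal.measurable_ofReal.comp h2


end NewtonAux

/-- Existence of a solution to Newton's minimal resistance problem in the class `C_M` of
concave functions with `0 ≤ u ≤ M` on a bounded open convex set `Ω ⊂ ℝ^d`, where the
resistance functional is `F(u) = ∫_Ω 1/(1 + |∇u(x)|²) dx`. -/
theorem exists_newton_minimizer (d : ℕ) (Ω : Set (EuclideanSpace ℝ (Fin d)))
    (hΩne : Ω.Nonempty) (hΩo : IsOpen Ω) (hΩb : Bornology.IsBounded Ω)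
    (hΩconv : Convex ℝ Ω) (M : ℝ) (hM : 0 < M) :
    ∃ u : EuclideanSpace ℝ (Fin d) → ℝ,
      (ConcaveOn ℝ Ω u ∧ ∀ x ∈ Ω, 0 ≤ u x ∧ u x ≤ M) ∧
      ∀ v : EuclideanSpace ℝ (Fin d) → ℝ,
        (ConcaveOn ℝ Ω v ∧ ∀ x ∈ Ω, 0 ≤ v x ∧ v x ≤ M) →
        ∫⁻ x in Ω, ENNReal.ofReal (1 / (1 + ‖gradient u x‖ ^ 2)) ≤
          ∫⁻ x in Ω, ENNReal.ofReal (1 / (1 + ‖gradient v x‖ ^ 2)) := by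
  classical
  set Fr : (EuclideanSpace ℝ (Fin d) → ℝ) → ℝ≥0∞ :=
    fun v => ∫⁻ x in Ω, ENNReal.ofReal (1 / (1 + ‖gradient v x‖ ^ 2)) with hFr
  set P : (EuclideanSpace ℝ (Fin d) → ℝ) → Prop :=
    fun v => ConcaveOn ℝ Ω v ∧ ∀ x ∈ Ω, 0 ≤ v x ∧ v x ≤ M with hP
  set S : Set ℝ≥0∞ := Fr '' {v | P v} with hS
  have hSne : S.Nonempty := by
    refine ⟨Fr (fun _ => M), ⟨fun _ => M, ?_, rfl⟩⟩
    exact ⟨concaveOn_const M hΩconv, fun x _ => ⟨hM.le, le_refl M⟩⟩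
  obtain ⟨f, -, hfm, hfS⟩ := exists_seq_tendsto_sInf hSne (OrderBot.bddBelow S)
  choose v hv1 hv2 using fun n => hfS n
  -- countable dense subset of Ω
  obtain ⟨D₀, hD₀c, hD₀d⟩ := TopologicalSpace.exists_countable_dense (↥Ω)
  set D : Set (EuclideanSpace ℝ (Fin d)) := (↑) '' D₀ with hD
  have hDc : D.Countable := hD₀c.image _
  have hDsub : D ⊆ Ω := by rintro _ ⟨y, -, rfl⟩; exact y.2
  have hDdense : ∀ x ∈ Ω, x ∈ closure D := by
    intro x hx
    have h1 : (⟨x, hx⟩ : ↥Ω) ∈ closure D₀ := by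
      rw [hD₀d.closure_eq]; trivial
    have h2 : x ∈ Subtype.val '' closure D₀ := ⟨⟨x, hx⟩, h1, rfl⟩
    exact (image_closure_subset_closure_image continuous_subtype_val) h2
  haveI : Countable ↥D := hDc.to_subtype
  haveI : CompactSpace (Set.Icc (0:ℝ) M) := isCompact_iff_compactSpace.1 isCompact_Icc
  -- diagonal extraction
  set g : ℕ → (↥D → Set.Icc (0:ℝ) M) := fun n y =>
    ⟨v n (y : EuclideanSpace ℝ (Fin d)),
      ((hv1 n).2 _ (hDsub y.2)).1, ((hv1 n).2 _ (hDsub y.2)).2⟩ with hg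
  obtain ⟨G, -, φ, hφ, hGconv⟩ := IsCompact.tendsto_subseq isCompact_univ
    (fun n => Set.mem_univ (g n))
  set w : ℕ → EuclideanSpace ℝ (Fin d) → ℝ := fun k => v (φ k) with hw
  have hwP : ∀ k, P (w k) := fun k => hv1 (φ k)
  have hFw : Tendsto (fun k => Fr (w k)) atTop (𝓝 (sInf S)) := by
    have : (fun k => Fr (w k)) = f ∘ φ := by
      funext k; exact hv2 (φ k)
    rw [this]
    exact hfm.comp hφ.tendsto_atTop
  have hptD : ∀ y : ↥D, Tendsto (fun k => w k (y : EuclideanSpace ℝ (Fin d)))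
      atTop (𝓝 ((G y : ℝ))) := by
    intro y
    have h1 : Tendsto (fun k => g (φ k) y) atTop (𝓝 (G y)) :=
      ((continuous_apply y).tendsto G).comp hGconv
    exact (continuous_subtype_val.tendsto (G y)).comp h1
  -- pointwise convergence on all of Ω
  have hcau : ∀ x ∈ Ω, ∃ L : ℝ, Tendsto (fun k => w k x) atTop (𝓝 L) := by
    intro x hx
    obtain ⟨ε₀, hε₀, hsubΩ⟩ := Metric.isOpen_iff.1 hΩo x hx
    set r : ℝ := ε₀ / 3 with hr
    have hr0 : 0 < r := by positivity
    have hball3 : ball x (3 * r) ⊆ Ω := by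
      rw [show 3 * r = ε₀ by rw [hr]; ring]
      exact hsubΩ
    set K : NNReal := (2 * M / (2 * r)).toNNReal with hK
    have hlipk : ∀ k, LipschitzOnWith K (w k) (ball x r) := by
      intro k
      have h1 : ConcaveOn ℝ (ball x (3 * r)) (w k) :=
        (hwP k).1.subset hball3 (convex_ball _ _)
      have h2 : ∀ a, dist a x < 3 * r → |w k a| ≤ M := by
        intro a ha
        obtain ⟨h0, hM'⟩ := (hwP k).2 a (hball3 (mem_ball.2 ha))
        rw [abs_le]
        exact ⟨by linarith, hM'⟩
      have := h1.lipschitzOnWith_of_abs_le (by linarith : (0:ℝ) < 2 * r) h2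
      rwa [show 3 * r - 2 * r = r by ring] at this
    suffices hcs : CauchySeq (fun k => w k x) from cauchySeq_tendsto_of_complete hcs
    rw [Metric.cauchySeq_iff]
    intro ε hε
    set δ : ℝ := min (r / 2) (ε / (4 * ((K : ℝ) + 1))) with hδ
    have hδ0 : 0 < δ := by
      apply lt_min (by linarith)
      positivity
    obtain ⟨y, hyD, hxy⟩ := Metric.mem_closure_iff.1 (hDdense x hx) δ hδ0
    have hyball : y ∈ ball x r := by
      rw [mem_ball, dist_comm]
      calc dist x y < δ := hxy
        _ ≤ r / 2 := min_le_left _ _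
        _ < r := by linarith
    have hxball : x ∈ ball x r := mem_ball_self hr0
    have hycau : CauchySeq (fun k => w k y) := (hptD ⟨y, hyD⟩).cauchySeq
    obtain ⟨N, hN⟩ := Metric.cauchySeq_iff.1 hycau (ε / 2) (by linarith)
    refine ⟨N, fun m hm n hn => ?_⟩
    have hbound : ∀ k, dist (w k x) (w k y) ≤ (K : ℝ) * δ := by
      intro k
      calc dist (w k x) (w k y) ≤ (K : ℝ) * dist x y :=
            (hlipk k).dist_le_mul _ hxball _ hyball
        _ ≤ (K : ℝ) * δ := by
            apply mul_le_mul_of_nonneg_left hxy.le K.coe_nonneg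
    have hKδ : (K : ℝ) * δ ≤ ε / 4 := by
      have h1 : δ ≤ ε / (4 * ((K : ℝ) + 1)) := min_le_right _ _
      have h2 : (0:ℝ) ≤ (K : ℝ) := K.coe_nonneg
      calc (K : ℝ) * δ ≤ ((K : ℝ) + 1) * (ε / (4 * ((K : ℝ) + 1))) := by
            apply mul_le_mul (by linarith) h1 hδ0.le (by linarith)
        _ = ε / 4 := by field_simp
    calc dist (w m x) (w n x)
        ≤ dist (w m x) (w m y) + dist (w m y) (w n y) + dist (w n y) (w n x) :=
          dist_triangle4 _ _ _ _
      _ < ε / 4 + ε / 2 + ε / 4 := by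
          have b1 := (hbound m).trans hKδ
          have b2 := hN m hm n hn
          have b3 := ((dist_comm (w n y) (w n x)) ▸ (hbound n)).trans hKδ
          -- b3 : dist (w n y) (w n x) ≤ ε / 4
          linarith [b1, b2, b3]
      _ = ε := by ring
  -- limit function
  set u : EuclideanSpace ℝ (Fin d) → ℝ := fun z =>
    if h : ∃ L : ℝ, Tendsto (fun k => w k z) atTop (𝓝 L) then h.choose else 0 with hu'
  have hu : ∀ z ∈ Ω, Tendsto (fun k => w k z) atTop (𝓝 (u z)) := by
    intro z hz
    have h := hcau z hz
    simp only [hu', dif_pos h]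
    exact h.choose_spec
  have hubd : ∀ x ∈ Ω, 0 ≤ u x ∧ u x ≤ M := by
    intro x hx
    constructor
    · exact ge_of_tendsto (hu x hx) (Eventually.of_forall fun k => ((hwP k).2 x hx).1)
    · exact le_of_tendsto (hu x hx) (Eventually.of_forall fun k => ((hwP k).2 x hx).2)
  have huconc : ConcaveOn ℝ Ω u := by
    refine ⟨hΩconv, fun x hx y hy a b ha hb hab => ?_⟩
    have hmem : a • x + b • y ∈ Ω := hΩconv hx hy ha hb hab
    have t1 : Tendsto (fun k => a • w k x + b • w k y) atTop (𝓝 (a • u x + b • u y)) := by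
      simp only [smul_eq_mul]
      exact ((hu x hx).const_mul a).add ((hu y hy).const_mul b)
    exact le_of_tendsto_of_tendsto' t1 (hu _ hmem)
      (fun k => (hwP k).1.2 hx hy ha hb hab)
  -- a.e. differentiability
  have hall : ∀ᵐ x, x ∈ Ω → ((∀ k, DifferentiableAt ℝ (w k) x) ∧ DifferentiableAt ℝ u x) := by
    have h1 : ∀ᵐ x, ∀ k, x ∈ Ω → DifferentiableAt ℝ (w k) x :=
      ae_all_iff.2 fun k => newton_ae_diff hΩo (hwP k).1 (hwP k).2
    have h2 := newton_ae_diff hΩo huconc hubd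
    filter_upwards [h1, h2] with x hx1 hx2 hxΩ
    exact ⟨fun k => hx1 k hxΩ, hx2 hxΩ⟩
  have hcont : Continuous (fun p : EuclideanSpace ℝ (Fin d) =>
      ENNReal.ofReal (1 / (1 + ‖p‖ ^ 2))) := by
    exact ENNReal.continuous_ofReal.comp (continuous_const.div
      (continuous_const.add (continuous_norm.pow 2)) (fun p => by positivity))
  have hten : ∀ᵐ x ∂(volume.restrict Ω),
      Tendsto (fun k => ENNReal.ofReal (1 / (1 + ‖gradient (w k) x‖ ^ 2))) atTop
        (𝓝 (ENNReal.ofReal (1 / (1 + ‖gradient u x‖ ^ 2)))) := by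
    filter_upwards [ae_restrict_mem hΩo.measurableSet, ae_restrict_of_ae hall] with x hxΩ hx
    obtain ⟨ε₀, hε₀, hsubΩ⟩ := Metric.isOpen_iff.1 hΩo x hxΩ
    have hball : closedBall x (ε₀ / 2) ⊆ Ω :=
      (closedBall_subset_ball (by linarith)).trans hsubΩ
    have hgrad := newton_grad_tendsto (fun k => (hwP k).1) (fun k => (hwP k).2)
      hu hxΩ (by positivity : (0:ℝ) < ε₀ / 2) hball (hx hxΩ).1 (hx hxΩ).2
    exact (hcont.tendsto _).comp hgrad
  -- conclusion via Fatou
  have hFu : Fr u ≤ sInf S := by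
    have heq : Fr u = ∫⁻ x in Ω, Filter.liminf
        (fun k => ENNReal.ofReal (1 / (1 + ‖gradient (w k) x‖ ^ 2))) atTop := by
      apply lintegral_congr_ae
      filter_upwards [hten] with x hx
      exact hx.liminf_eq.symm
    rw [heq]
    calc ∫⁻ x in Ω, Filter.liminf
          (fun k => ENNReal.ofReal (1 / (1 + ‖gradient (w k) x‖ ^ 2))) atTop
        ≤ Filter.liminf (fun k => Fr (w k)) atTop :=
          lintegral_liminf_le fun k => newton_meas_integrand (w k)
      _ = sInf S := hFw.liminf_eq
  refine ⟨u, ⟨huconc, hubd⟩, fun v' hv' => ?_⟩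
  exact le_trans hFu (sInf_le ⟨v', hv', rfl⟩)
end

section
/- Let Ω ⊂ ℝ^d be a bounded measurable set of positive Lebesgue measure, let M > 0, and for each n ∈ ℕ define u_n(x) = M sin²(n|x|). Then ∫_Ω 1/(1 + |∇u_n(x)|²) dx → 0 as n → ∞, even though 0 ≤ u_n(x) ≤ M for every x and n. -/
open Filter MeasureTheory Topology Real InnerProductSpace
open scoped ENNReal NNReal

open Filter MeasureTheory Topology Real InnerProductSpace

variable {E : Type*} [NormedAddCommGroup E] [InnerProductSpace ℝ E] [CompleteSpace E]

theorem hasFDerivAt_norm' {x : E} (hx : x ≠ 0) :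
    HasFDerivAt (fun y : E => ‖y‖) (‖x‖⁻¹ • innerSL ℝ x) x := by
  have h1 : HasFDerivAt (fun y : E => ‖y‖ ^ 2) (2 • innerSL ℝ x) x :=
    (hasStrictFDerivAt_norm_sq x).hasFDerivAt
  have hx' : (0:ℝ) < ‖x‖ := norm_pos_iff.2 hx
  have h2 : HasDerivAt Real.sqrt (1 / (2 * Real.sqrt (‖x‖ ^ 2))) (‖x‖ ^ 2) :=
    Real.hasDerivAt_sqrt (by positivity)
  have h3 := h2.comp_hasFDerivAt x h1
  have heq : Real.sqrt ∘ (fun y : E => ‖y‖ ^ 2) = fun y : E => ‖y‖ := by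
    funext y; simp [Function.comp, Real.sqrt_sq (norm_nonneg y)]
  rw [heq] at h3
  convert h3 using 1
  · rfl
  · rfl
  rw [Real.sqrt_sq (norm_nonneg x)]
  ext y
  simp [ContinuousLinearMap.smul_apply]
  ring

theorem hasGradientAt_osc (M : ℝ) (n : ℕ) {x : E} (hx : x ≠ 0) :
    HasGradientAt (fun y : E => M * Real.sin ((n : ℝ) * ‖y‖) ^ 2)
      ((M * n * Real.sin (2 * ((n : ℝ) * ‖x‖)) * ‖x‖⁻¹) • x) x := by
  have hg : HasDerivAt (fun t : ℝ => M * Real.sin ((n:ℝ) * t) ^ 2)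
      (M * n * Real.sin (2 * ((n:ℝ) * ‖x‖))) ‖x‖ := by
    have h := ((((hasDerivAt_id ‖x‖).const_mul (n:ℝ)).sin).pow 2).const_mul M
    simp only [id] at h
    convert h using 1
    · rfl
    · rfl
    · rfl
    rw [Real.sin_two_mul]
    ring
  have h3 := hg.comp_hasFDerivAt x (hasFDerivAt_norm' hx)
  rw [hasFDerivAt_iff_hasGradientAt] at h3
  have h4 : ((fun t : ℝ => M * Real.sin ((n:ℝ) * t) ^ 2) ∘ (Norm.norm : E → ℝ))
      = fun y : E => M * Real.sin ((n : ℝ) * ‖y‖) ^ 2 := rfl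
  rw [h4] at h3
  convert h3 using 1
  apply (toDual ℝ E).injective
  rw [LinearIsometryEquiv.apply_symm_apply]
  ext y
  simp [toDual_apply_apply, real_inner_smul_left, ContinuousLinearMap.smul_apply]
  ring

theorem norm_gradient_osc (M : ℝ) (n : ℕ) {x : E} (hx : x ≠ 0) :
    ‖gradient (fun y : E => M * Real.sin ((n : ℝ) * ‖y‖) ^ 2) x‖
      = |M| * n * |Real.sin (2 * ((n : ℝ) * ‖x‖))| := by
  rw [(hasGradientAt_osc M n hx).gradient, norm_smul]
  have hx' : (0:ℝ) < ‖x‖ := norm_pos_iff.2 hx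
  rw [Real.norm_eq_abs, abs_mul, abs_mul, abs_mul, abs_inv, abs_norm, Nat.abs_cast]
  field_simp

theorem abs_sin_lower {s : ℝ} (hs : |s| ≤ π / 2) : 2 / π * |s| ≤ |Real.sin s| := by
  have hpi := Real.pi_pos
  have h1 : 2 / π * |s| ≤ Real.sin |s| := Real.mul_le_sin (abs_nonneg s) hs
  have hs2 := abs_le.1 hs
  have h2 : Real.sin |s| = |Real.sin s| := by
    rcases le_or_gt 0 s with h | h
    · rw [abs_of_nonneg h, abs_of_nonneg (Real.sin_nonneg_of_nonneg_of_le_pi h (by linarith [hs2.2]))]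
    · rw [abs_of_neg h, Real.sin_neg,
        abs_of_nonpos (Real.sin_nonpos_of_nonpos_of_neg_pi_le h.le (by linarith [hs2.1]))]
  rwa [h2] at h1

theorem near_multiple {t ε : ℝ} (ht : 0 ≤ t) (h : |Real.sin t| ≤ ε) :
    ∃ k : ℕ, |t - k * π| ≤ π * ε / 2 := by
  have hpi := Real.pi_pos
  set k0 : ℤ := round (t / π) with hk0
  have hk0nn : (0:ℤ) ≤ k0 := by
    rw [hk0, round_eq]
    apply Int.le_floor.2
    push_cast
    positivity
  have habs : |t / π - k0| ≤ 1 / 2 := abs_sub_round (t / π)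
  have hs : |t - k0 * π| ≤ π / 2 := by
    have heq : t - k0 * π = (t / π - k0) * π := by field_simp
    rw [heq, abs_mul, abs_of_pos hpi]
    have := mul_le_mul_of_nonneg_right habs hpi.le
    linarith
  have hsin : |Real.sin (t - k0 * π)| = |Real.sin t| := by
    have h5 := Real.sin_add_int_mul_pi (t - k0 * π) k0
    rw [sub_add_cancel] at h5
    have h7 : |((-1:ℝ)) ^ k0| = 1 := by
      rcases Int.even_or_odd k0 with he | ho
      · rw [he.neg_one_zpow]; simp
      · rw [Odd.neg_one_zpow ho]; simp
    rw [h5, abs_mul, h7, one_mul]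
  have hlow := abs_sin_lower hs
  rw [hsin] at hlow
  refine ⟨k0.toNat, ?_⟩
  have hc : ((k0.toNat : ℕ) : ℝ) = ((k0 : ℤ) : ℝ) := by
    exact_mod_cast congrArg (Int.cast : ℤ → ℝ) (Int.toNat_of_nonneg hk0nn)
  rw [hc]
  have h6 : 2 / π * |t - (k0:ℝ) * π| ≤ ε := hlow.trans h
  have h8 := mul_le_mul_of_nonneg_right h6 hpi.le
  have h9 : 2 / π * |t - (k0:ℝ) * π| * π = 2 * |t - (k0:ℝ) * π| := by field_simp
  rw [h9] at h8
  linarith [le_abs_self (t - (k0:ℝ) * π), neg_abs_le (t - (k0:ℝ) * π)]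

theorem pow_sub_pow_le' (d : ℕ) {a b R' : ℝ} (ha : 0 ≤ a) (hab : a ≤ b) (hbR : b ≤ R') :
    b ^ d - a ^ d ≤ d * R' ^ (d - 1) * (b - a) := by
  induction d with
  | zero => simp
  | succ m ih =>
    have hR : 0 ≤ R' := ha.trans (hab.trans hbR)
    have hbm : b ^ m ≤ R' ^ m := pow_le_pow_left₀ (ha.trans hab) hbR m
    have h2 : b ^ m - a ^ m ≤ m * R' ^ (m - 1) * (b - a) := ih
    have key : b ^ (m+1) - a ^ (m+1) = b ^ m * (b - a) + (b ^ m - a ^ m) * a := by ring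
    rcases Nat.eq_zero_or_pos m with hm | hm
    · subst hm; simpa using key.le
    · obtain ⟨k, rfl⟩ : ∃ k, m = k + 1 := ⟨m - 1, (Nat.succ_pred_eq_of_pos hm).symm⟩
      have haR : a ≤ R' := hab.trans hbR
      simp only [Nat.add_sub_cancel] at h2 ⊢
      have t1 : (b ^ (k+1) - a ^ (k+1)) * a ≤ (((k:ℝ)+1) * R' ^ k * (b - a)) * a := by
        push_cast at h2
        exact mul_le_mul_of_nonneg_right h2 ha
      have t2 : (((k:ℝ)+1) * R' ^ k * (b - a)) * a ≤ (((k:ℝ)+1) * R' ^ k * (b - a)) * R' := by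
        apply mul_le_mul_of_nonneg_left haR
        have : (0:ℝ) ≤ b - a := by linarith
        positivity
      have t3 : b ^ (k+1) * (b - a) ≤ R' ^ (k+1) * (b - a) := by
        apply mul_le_mul_of_nonneg_right hbm (by linarith)
      have t4 : (((k:ℝ)+1) * R' ^ k * (b - a)) * R' = ((k:ℝ)+1) * R' ^ (k+1) * (b - a) := by
        rw [pow_succ]; ring
      push_cast
      nlinarith [t1.trans t2, t3, t4, key]


theorem vol_bad_le (d : ℕ) (hd : 0 < d) (R ε : ℝ) (hR : 0 ≤ R) (hε : 0 < ε) (hε1 : ε ≤ 1)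
    (n : ℕ) (hn : 1 ≤ n) :
    volume (⋃ k ∈ Finset.range (⌈2 * n * R / π⌉₊ + 1),
      (Metric.closedBall (0 : EuclideanSpace ℝ (Fin d)) (((k:ℝ) * π + π * ε / 2) / (2 * n)) \
        Metric.ball 0 (((k:ℝ) * π - π * ε / 2) / (2 * n))))
      ≤ ENNReal.ofReal ((d:ℝ) * (R+3)^(d-1) * (R + π) * ε) *
        ENNReal.ofReal (Real.sqrt π ^ d / Real.Gamma (d / 2 + 1)) := by
  haveI : Nonempty (Fin d) := ⟨⟨0, hd⟩⟩
  have hpi := Real.pi_pos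
  have hn' : (1:ℝ) ≤ (n:ℝ) := by exact_mod_cast hn
  have hnpos : (0:ℝ) < (n:ℝ) := by linarith
  set c0 : ℝ≥0∞ := ENNReal.ofReal (Real.sqrt π ^ d / Real.Gamma (d / 2 + 1)) with hc0
  set Kn := ⌈2 * n * R / π⌉₊ + 1 with hKn
  set w : ℝ := π * ε / 2 with hw
  have hwpos : 0 < w := by positivity
  have hw2 : w ≤ π / 2 := by rw [hw]; nlinarith
  set per : ℝ := (d:ℝ) * (R+3)^(d-1) * (π * ε / (2*n)) with hper
  have hpernn : 0 ≤ per := by positivity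
  have hann : ∀ k ∈ Finset.range Kn,
      volume (Metric.closedBall (0 : EuclideanSpace ℝ (Fin d)) (((k:ℝ) * π + w) / (2 * n)) \
        Metric.ball 0 (((k:ℝ) * π - w) / (2 * n))) ≤ ENNReal.ofReal per * c0 := by
    intro k hk
    set b : ℝ := ((k:ℝ) * π + w) / (2 * n) with hb
    set a : ℝ := ((k:ℝ) * π - w) / (2 * n) with ha
    have hknn : (0:ℝ) ≤ (k:ℝ) := Nat.cast_nonneg k
    have hbpos : 0 < b := by positivity
    have hab : a ≤ b := by rw [ha, hb]; gcongr; linarith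
    have hkc : (k:ℝ) * π ≤ 2 * n * R + π := by
      have h1 : (k:ℝ) ≤ (⌈2 * n * R / π⌉₊ : ℝ) := by
        have := Finset.mem_range.1 hk
        rw [hKn] at this
        exact_mod_cast Nat.lt_succ_iff.1 this
      have h2 : (⌈2 * n * R / π⌉₊ : ℝ) ≤ 2 * n * R / π + 1 :=
        (Nat.ceil_lt_add_one (by positivity)).le
      have h3 : (k:ℝ) * π ≤ (2 * n * R / π + 1) * π :=
        mul_le_mul_of_nonneg_right (h1.trans h2) hpi.le
      rw [add_mul, div_mul_cancel₀ _ hpi.ne'] at h3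
      linarith
    have hbR3 : b ≤ R + 3 := by
      rw [hb, div_le_iff₀ (by positivity)]
      nlinarith [Real.pi_le_four]
    set a' : ℝ := max a 0 with ha'
    have hofa : ENNReal.ofReal a = ENNReal.ofReal a' := by
      rcases le_total a 0 with h | h
      · rw [ENNReal.ofReal_of_nonpos h, ha', max_eq_right h, ENNReal.ofReal_zero]
      · rw [ha', max_eq_left h]
    have ha'b : a' ≤ b := max_le hab hbpos.le
    have hba' : b - a' ≤ π * ε / (2*n) := by
      rcases le_total 0 a with h | h
      · rw [ha', max_eq_left h, hb, ha, div_sub_div_same]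
        have : (k:ℝ) * π + w - ((k:ℝ) * π - w) = 2 * w := by ring
        rw [this, hw]
        rw [div_le_div_iff₀ (by positivity) (by positivity)]
        ring_nf
        nlinarith
      · rw [ha', max_eq_right h, sub_zero, hb]
        have hk0 : (k:ℝ) * π ≤ w := by
          rw [ha] at h
          have := (div_nonpos_iff.1 h)
          rcases this with ⟨h1, h2⟩ | ⟨h1, h2⟩
          · linarith
          · nlinarith
        rw [div_le_div_iff₀ (by positivity) (by positivity), hw]
        nlinarith
    have hdiff : volume (Metric.closedBall (0 : EuclideanSpace ℝ (Fin d)) b \ Metric.ball 0 a)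
        = volume (Metric.closedBall (0 : EuclideanSpace ℝ (Fin d)) b) -
          volume (Metric.ball (0 : EuclideanSpace ℝ (Fin d)) a) := by
      apply measure_diff ((Metric.ball_subset_ball hab).trans Metric.ball_subset_closedBall)
        measurableSet_ball.nullMeasurableSet measure_ball_lt_top.ne
    rw [hdiff, EuclideanSpace.volume_closedBall, EuclideanSpace.volume_ball, Fintype.card_fin]
    rw [← hc0, hofa]
    rw [← ENNReal.ofReal_pow hbpos.le, ← ENNReal.ofReal_pow (le_max_right a 0)]
    rw [tsub_le_iff_right]
    have hcomb : ENNReal.ofReal per * c0 + ENNReal.ofReal (a' ^ d) * c0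
        = ENNReal.ofReal (per + a' ^ d) * c0 := by
      rw [ENNReal.ofReal_add hpernn (by positivity), add_mul]
    rw [hcomb]
    apply mul_le_mul_left
    apply ENNReal.ofReal_le_ofReal
    have hkey := pow_sub_pow_le' d (le_max_right a 0) ha'b hbR3
    have hmul : (d:ℝ) * (R+3)^(d-1) * (b - a') ≤ per := by
      rw [hper]
      exact mul_le_mul_of_nonneg_left hba' (by positivity)
    linarith
  calc volume (⋃ k ∈ Finset.range Kn,
        (Metric.closedBall (0 : EuclideanSpace ℝ (Fin d)) (((k:ℝ) * π + w) / (2 * n)) \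
          Metric.ball 0 (((k:ℝ) * π - w) / (2 * n))))
      ≤ ∑ k ∈ Finset.range Kn, volume
        (Metric.closedBall (0 : EuclideanSpace ℝ (Fin d)) (((k:ℝ) * π + w) / (2 * n)) \
          Metric.ball 0 (((k:ℝ) * π - w) / (2 * n))) := measure_biUnion_finset_le _ _
    _ ≤ ∑ _k ∈ Finset.range Kn, ENNReal.ofReal per * c0 := Finset.sum_le_sum hann
    _ = (Kn : ℝ≥0∞) * (ENNReal.ofReal per * c0) := by
        rw [Finset.sum_const, Finset.card_range, nsmul_eq_mul]
    _ ≤ ENNReal.ofReal ((d:ℝ) * (R+3)^(d-1) * (R + π) * ε) * c0 := by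
        rw [← mul_assoc, ← ENNReal.ofReal_natCast Kn, ← ENNReal.ofReal_mul (by positivity)]
        apply mul_le_mul_left
        apply ENNReal.ofReal_le_ofReal
        have hKn' : (Kn:ℝ) ≤ 2 * n * R / π + 2 := by
          rw [hKn]
          push_cast
          have := (Nat.ceil_lt_add_one (show (0:ℝ) ≤ 2 * n * R / π by positivity)).le
          linarith
        have hq : (Kn:ℝ) * (π * ε / (2*n)) ≤ (R + π) * ε := by
          calc (Kn:ℝ) * (π * ε / (2*n)) ≤ (2 * n * R / π + 2) * (π * ε / (2*n)) :=
                mul_le_mul_of_nonneg_right hKn' (by positivity)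
            _ = R * ε + π * ε / n := by field_simp
            _ ≤ R * ε + π * ε := by
                have : π * ε / n ≤ π * ε := div_le_self (by positivity) hn'
                linarith
            _ = (R + π) * ε := by ring
        calc (Kn:ℝ) * per = (d:ℝ) * (R+3)^(d-1) * ((Kn:ℝ) * (π * ε / (2*n))) := by
              rw [hper]; ring
          _ ≤ (d:ℝ) * (R+3)^(d-1) * ((R + π) * ε) :=
              mul_le_mul_of_nonneg_left hq (by positivity)
          _ = (d:ℝ) * (R+3)^(d-1) * (R + π) * ε := by ring

theorem cover_bad (d n : ℕ) (hn : 1 ≤ n) (R ε : ℝ) (hε : 0 < ε) (hε1 : ε ≤ 1)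
    (x : EuclideanSpace ℝ (Fin d)) (hx1 : ‖x‖ ≤ R)
    (hx2 : |Real.sin (2 * ((n:ℝ) * ‖x‖))| ≤ ε) :
    x ∈ ⋃ k ∈ Finset.range (⌈2 * n * R / π⌉₊ + 1),
      (Metric.closedBall (0 : EuclideanSpace ℝ (Fin d)) (((k:ℝ) * π + π * ε / 2) / (2 * n)) \
        Metric.ball 0 (((k:ℝ) * π - π * ε / 2) / (2 * n))) := by
  have hpi := Real.pi_pos
  have hn' : (1:ℝ) ≤ (n:ℝ) := by exact_mod_cast hn
  have hnpos : (0:ℝ) < (n:ℝ) := by linarith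
  set t : ℝ := 2 * ((n:ℝ) * ‖x‖) with htdef
  have ht : 0 ≤ t := by positivity
  obtain ⟨k, hk⟩ := near_multiple ht hx2
  have habs := abs_le.1 hk
  have hkmem : k < ⌈2 * n * R / π⌉₊ + 1 := by
    have h1 : (k:ℝ) * π ≤ t + π * ε / 2 := by linarith [habs.1]
    have h2 : t ≤ 2 * n * R := by
      rw [htdef]; nlinarith
    have h3 : (k:ℝ) ≤ 2 * n * R / π + ε / 2 := by
      rw [← mul_le_mul_iff_of_pos_right hpi]
      have hd : (2 * (n:ℝ) * R / π + ε / 2) * π = 2 * n * R + ε / 2 * π := by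
        field_simp
      rw [hd]
      linarith
    have h4 : (k:ℝ) < (⌈2 * n * R / π⌉₊ : ℝ) + 1 := by
      have := Nat.le_ceil (2 * n * R / π)
      linarith
    exact_mod_cast (by push_cast; linarith : (k:ℝ) < ((⌈2 * n * R / π⌉₊ + 1 : ℕ) : ℝ))
  simp only [Set.mem_iUnion, Finset.mem_range]
  refine ⟨k, hkmem, ?_, ?_⟩
  · rw [Metric.mem_closedBall, dist_zero_right, le_div_iff₀ (by positivity)]
    nlinarith [habs.2]
  · rw [Metric.mem_ball, dist_zero_right, not_lt, div_le_iff₀ (by positivity)]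
    nlinarith [habs.1]

/-- For the highly oscillating profiles `u_n(x) = M sin²(n|x|)` on a bounded measurable set
`Ω ⊂ ℝ^d` (`d ≥ 1`) of positive Lebesgue measure, the Newton resistance tends to `0` as
`n → ∞`, although `0 ≤ u_n ≤ M` everywhere. -/
theorem newton_resistance_oscillating_tendsto_zero (d : ℕ) (hd : 0 < d)
    (Ω : Set (EuclideanSpace ℝ (Fin d)))
    (hΩb : Bornology.IsBounded Ω) (hΩm : MeasurableSet Ω) (hΩpos : 0 < volume Ω)
    (M : ℝ) (hM : 0 < M) :
    (∀ n : ℕ, ∀ x : EuclideanSpace ℝ (Fin d),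
      0 ≤ M * Real.sin ((n : ℝ) * ‖x‖) ^ 2 ∧ M * Real.sin ((n : ℝ) * ‖x‖) ^ 2 ≤ M) ∧
    Tendsto (fun n : ℕ => ∫⁻ x in Ω, ENNReal.ofReal
        (1 / (1 + ‖gradient
          (fun y : EuclideanSpace ℝ (Fin d) => M * Real.sin ((n : ℝ) * ‖y‖) ^ 2) x‖ ^ 2)))
      atTop (𝓝 0) := by
  constructor
  · intro n x
    have hs := Real.sin_sq_le_one ((n:ℝ) * ‖x‖)
    exact ⟨by positivity, by nlinarith⟩
  · obtain ⟨R0, hΩR0⟩ := hΩb.subset_closedBall 0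
    set R : ℝ := max R0 0 with hRdef
    have hR : 0 ≤ R := le_max_right _ _
    have hΩR : Ω ⊆ Metric.closedBall 0 R :=
      hΩR0.trans (Metric.closedBall_subset_closedBall (le_max_left _ _))
    have hpi := Real.pi_pos
    haveI : Nonempty (Fin d) := ⟨⟨0, hd⟩⟩
    set c0r : ℝ := Real.sqrt π ^ d / Real.Gamma (d / 2 + 1) with hc0r
    have hc0rnn : 0 ≤ c0r :=
      div_nonneg (pow_nonneg (Real.sqrt_nonneg _) _)
        (Real.Gamma_pos_of_pos (by positivity)).le
    set C : ℝ := (d:ℝ) * (R+3)^(d-1) * (R + π) with hC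
    have hCnn : 0 ≤ C := by positivity
    have hΩfin : volume Ω ≠ ⊤ :=
      ((measure_mono hΩR).trans_lt measure_closedBall_lt_top).ne
    rw [ENNReal.tendsto_nhds_zero]
    intro ε' hε'
    rcases eq_or_ne ε' ⊤ with rfl | htop
    · exact Eventually.of_forall fun n => le_top
    set εr := ε'.toReal with hεr
    have hεrpos : 0 < εr := ENNReal.toReal_pos hε'.ne' htop
    set A : ℝ := C * c0r with hA
    have hAnn : 0 ≤ A := mul_nonneg hCnn hc0rnn
    set ε : ℝ := min 1 (εr / (2 * (A + 1))) with hε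
    have hεpos : 0 < ε := lt_min one_pos (by positivity)
    have hε1 : ε ≤ 1 := min_le_left _ _
    have hvol : ENNReal.ofReal (C * ε) * ENNReal.ofReal c0r ≤ ENNReal.ofReal (εr / 2) := by
      rw [← ENNReal.ofReal_mul (by positivity)]
      apply ENNReal.ofReal_le_ofReal
      have hεle : ε ≤ εr / (2 * (A + 1)) := min_le_right _ _
      calc C * ε * c0r = A * ε := by rw [hA]; ring
        _ ≤ A * (εr / (2 * (A + 1))) := mul_le_mul_of_nonneg_left hεle hAnn
        _ ≤ (A + 1) * (εr / (2 * (A + 1))) :=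
            mul_le_mul_of_nonneg_right (by linarith) (by positivity)
        _ = εr / 2 := by field_simp
    have htail : Tendsto (fun n : ℕ =>
        volume Ω * ENNReal.ofReal (1 / (1 + M^2 * ε^2 * (n:ℝ)^2))) atTop (𝓝 0) := by
      have h1 : Tendsto (fun n : ℕ => (1:ℝ) + M^2 * ε^2 * (n:ℝ)^2) atTop atTop := by
        apply tendsto_atTop_add_const_left
        have h2 : Tendsto (fun n : ℕ => ((n:ℝ))^2) atTop atTop :=
          (tendsto_pow_atTop two_ne_zero).comp tendsto_natCast_atTop_atTop
        exact h2.const_mul_atTop (by positivity)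
      have h3 : Tendsto (fun n : ℕ => 1 / (1 + M^2 * ε^2 * (n:ℝ)^2)) atTop (𝓝 0) := by
        simpa [one_div, Pi.inv_def] using h1.inv_tendsto_atTop
      have h4 : Tendsto (fun n : ℕ => ENNReal.ofReal (1 / (1 + M^2 * ε^2 * (n:ℝ)^2)))
          atTop (𝓝 0) := by
        simpa using ENNReal.tendsto_ofReal h3
      simpa using ENNReal.Tendsto.const_mul h4 (Or.inr hΩfin)
    have hev := (ENNReal.tendsto_nhds_zero.mp htail) (ENNReal.ofReal (εr / 2))
      (ENNReal.ofReal_pos.2 (by positivity))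
    filter_upwards [hev, eventually_ge_atTop 1] with n hntail hn1
    set Bad : Set (EuclideanSpace ℝ (Fin d)) :=
      ⋃ k ∈ Finset.range (⌈2 * n * R / π⌉₊ + 1),
        (Metric.closedBall (0 : EuclideanSpace ℝ (Fin d)) (((k:ℝ) * π + π * ε / 2) / (2 * n)) \
          Metric.ball 0 (((k:ℝ) * π - π * ε / 2) / (2 * n))) with hBad
    have hBadm : MeasurableSet Bad := by
      apply Finset.measurableSet_biUnion
      intro k _
      exact measurableSet_closedBall.diff measurableSet_ball
    have hae : ∀ᵐ x ∂(volume.restrict Ω),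
        ENNReal.ofReal (1 / (1 + ‖gradient
          (fun y : EuclideanSpace ℝ (Fin d) => M * Real.sin ((n : ℝ) * ‖y‖) ^ 2) x‖ ^ 2))
        ≤ Bad.indicator (fun _ => (1:ℝ≥0∞)) x
          + ENNReal.ofReal (1 / (1 + M^2 * ε^2 * (n:ℝ)^2)) := by
      have h0 : (volume.restrict Ω) ({(0 : EuclideanSpace ℝ (Fin d))}) = 0 := by
        rw [Measure.restrict_apply (measurableSet_singleton _)]
        apply measure_mono_null Set.inter_subset_left
        apply measure_mono_null
          (show {(0 : EuclideanSpace ℝ (Fin d))} ⊆ Metric.closedBall 0 0 by simp)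
        rw [EuclideanSpace.volume_closedBall, Fintype.card_fin]
        simp [zero_pow hd.ne']
      have hne : ∀ᵐ x ∂(volume.restrict Ω), x ≠ (0 : EuclideanSpace ℝ (Fin d)) := by
        rw [ae_iff]
        convert h0 using 2
        ext y
        simp
      filter_upwards [ae_restrict_mem hΩm, hne] with x hxΩ hx0
      by_cases hxB : x ∈ Bad
      · rw [Set.indicator_of_mem hxB]
        refine le_trans ?_ le_self_add
        apply ENNReal.ofReal_le_one.2
        rw [div_le_one (by positivity)]
        nlinarith [sq_nonneg (‖gradient
          (fun y : EuclideanSpace ℝ (Fin d) => M * Real.sin ((n : ℝ) * ‖y‖) ^ 2) x‖)]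
      · have hxR : ‖x‖ ≤ R := by
          simpa [Metric.mem_closedBall, dist_zero_right] using hΩR hxΩ
        have hsin : ε < |Real.sin (2 * ((n:ℝ) * ‖x‖))| := by
          by_contra hcon
          push_neg at hcon
          exact hxB (cover_bad d n hn1 R ε hεpos hε1 x hxR hcon)
        rw [norm_gradient_osc M n hx0]
        refine le_trans ?_ le_add_self
        apply ENNReal.ofReal_le_ofReal
        apply one_div_le_one_div_of_le (by positivity)
        have hexp : (|M| * ↑n * |Real.sin (2 * ((n:ℝ) * ‖x‖))|)^2
            = M^2 * (n:ℝ)^2 * (Real.sin (2 * ((n:ℝ) * ‖x‖)))^2 := by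
          rw [mul_pow, mul_pow, sq_abs, sq_abs]
        have hε2 : ε^2 ≤ (Real.sin (2 * ((n:ℝ) * ‖x‖)))^2 := by
          rw [← sq_abs (Real.sin _)]
          exact pow_le_pow_left₀ hεpos.le hsin.le 2
        have hmul := mul_le_mul_of_nonneg_left hε2
          (show (0:ℝ) ≤ M^2 * (n:ℝ)^2 by positivity)
        rw [hexp]
        nlinarith [hmul]
    calc ∫⁻ x in Ω, ENNReal.ofReal (1 / (1 + ‖gradient
            (fun y : EuclideanSpace ℝ (Fin d) => M * Real.sin ((n : ℝ) * ‖y‖) ^ 2) x‖ ^ 2))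
        ≤ ∫⁻ x in Ω, (Bad.indicator (fun _ => (1:ℝ≥0∞)) x
            + ENNReal.ofReal (1 / (1 + M^2 * ε^2 * (n:ℝ)^2))) := lintegral_mono_ae hae
      _ = (∫⁻ x in Ω, Bad.indicator (fun _ => (1:ℝ≥0∞)) x)
            + ENNReal.ofReal (1 / (1 + M^2 * ε^2 * (n:ℝ)^2)) * volume Ω := by
          rw [lintegral_add_right _ measurable_const, setLIntegral_const]
      _ ≤ ENNReal.ofReal (C * ε) * ENNReal.ofReal c0r
            + volume Ω * ENNReal.ofReal (1 / (1 + M^2 * ε^2 * (n:ℝ)^2)) := by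
          apply add_le_add ?_ (mul_comm _ _).le
          rw [lintegral_indicator hBadm, setLIntegral_one, Measure.restrict_apply hBadm]
          exact le_trans (measure_mono Set.inter_subset_left)
            (vol_bad_le d hd R ε hR hεpos hε1 n hn1)
      _ ≤ ENNReal.ofReal (εr / 2) + ENNReal.ofReal (εr / 2) := add_le_add hvol hntail
      _ = ε' := by
          rw [← ENNReal.ofReal_add (by positivity) (by positivity)]
          rw [show εr / 2 + εr / 2 = εr by ring, hεr, ENNReal.ofReal_toReal htop]
end

section
/- The function f(t) = (t/(1+t²)²) · (−7/4 + (3/4)t⁴ + t² − ln t), defined for t ≥ 1, satisfies f(1) = 0, f is strictly increasing on [1, ∞), and f(t) → +∞ as t → ∞; consequently f is a bijection from [1, ∞) onto [0, ∞). -/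
open Filter Topology

private lemma newton_hasDerivAt (t : ℝ) (ht : 0 < t) :
    HasDerivAt (fun t : ℝ => t / (1 + t ^ 2) ^ 2 * (-7 / 4 + 3 / 4 * t ^ 4 + t ^ 2 - Real.log t))
      ((-11/4 + 29/4*t^2 + 11/4*t^4 + 3/4*t^6 + (3*t^2 - 1) * Real.log t) / (1+t^2)^3) t := by
  have hden : (1 + t ^ 2 : ℝ) ≠ 0 := by positivity
  have hden2 : ((1 + t ^ 2 : ℝ) ^ 2) ≠ 0 := by positivity
  have hD : HasDerivAt (fun t : ℝ => (1 + t ^ 2) ^ 2) (2 * (1 + t ^ 2) ^ 1 * (2 * t)) t := by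
    have h1 : HasDerivAt (fun t : ℝ => 1 + t ^ 2) (2 * t) t := by
      simpa using ((hasDerivAt_pow 2 t).const_add 1)
    exact h1.pow 2
  have hA : HasDerivAt (fun t : ℝ => t / (1 + t ^ 2) ^ 2)
      ((1 * (1 + t ^ 2) ^ 2 - t * (2 * (1 + t ^ 2) ^ 1 * (2 * t))) / ((1 + t ^ 2) ^ 2) ^ 2) t :=
    (hasDerivAt_id t).div hD hden2
  have hB : HasDerivAt (fun t : ℝ => -7 / 4 + 3 / 4 * t ^ 4 + t ^ 2 - Real.log t)
      (3 / 4 * (4 * t ^ 3) + 2 * t - t⁻¹) t := by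
    have h4 : HasDerivAt (fun t : ℝ => 3 / 4 * t ^ 4) (3 / 4 * (4 * t ^ 3)) t := by
      simpa using (hasDerivAt_pow 4 t).const_mul (3/4 : ℝ)
    have h2 : HasDerivAt (fun t : ℝ => t ^ 2) (2 * t) t := by
      simpa using hasDerivAt_pow 2 t
    exact ((h4.const_add (-7/4 : ℝ)).add h2).sub (Real.hasDerivAt_log ht.ne')
  have := hA.mul hB
  refine this.congr_deriv ?_
  have ht0 : t ≠ 0 := ht.ne'
  field_simp
  ring

/-- The function `f(t) = (t/(1+t²)²)(−7/4 + (3/4)t⁴ + t² − ln t)` appearing in the explicit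
radial solution of Newton's problem satisfies `f(1) = 0`, is strictly increasing on `[1, ∞)`,
tends to `+∞` at `+∞`, and is a bijection from `[1, ∞)` onto `[0, ∞)`. -/
theorem radial_parameter_function_bijective :
    let f : ℝ → ℝ := fun t =>
      t / (1 + t ^ 2) ^ 2 * (-7 / 4 + 3 / 4 * t ^ 4 + t ^ 2 - Real.log t)
    f 1 = 0 ∧ StrictMonoOn f (Set.Ici 1) ∧ Tendsto f atTop atTop ∧
      Set.BijOn f (Set.Ici 1) (Set.Ici 0) := by
  intro f
  have hf1 : f 1 = 0 := by simp [f, Real.log_one]; ring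
  have hcont : ContinuousOn f (Set.Ici 1) := fun t ht =>
    ((newton_hasDerivAt t (lt_of_lt_of_le one_pos ht)).continuousAt).continuousWithinAt
  have hmono : StrictMonoOn f (Set.Ici 1) := by
    apply strictMonoOn_of_deriv_pos (convex_Ici 1) hcont
    intro t ht
    rw [interior_Ici] at ht
    have ht1 : (1 : ℝ) < t := ht
    have ht0 : (0 : ℝ) < t := by linarith
    rw [(newton_hasDerivAt t ht0).deriv]
    have hlog : 0 ≤ Real.log t := Real.log_nonneg ht1.le
    have h1 : (0:ℝ) < (3*t^2 - 1) * Real.log t + (-11/4 + 29/4*t^2 + 11/4*t^4 + 3/4*t^6) := by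
      have h2 : (1:ℝ) ≤ t^2 := by nlinarith
      nlinarith [sq_nonneg (t^2), sq_nonneg (t^3), mul_nonneg (by nlinarith : (0:ℝ) ≤ 3*t^2 - 1) hlog]
    have h2 : (0:ℝ) < (1 + t^2)^3 := by positivity
    apply div_pos _ h2
    linarith
  have hbound : ∀ t : ℝ, 2 ≤ t → t / 8 ≤ f t := by
    intro t ht
    have ht0 : (0:ℝ) < t := by linarith
    have hlog : Real.log t ≤ t := by
      have := Real.log_le_sub_one_of_pos ht0
      linarith
    have hD : (0:ℝ) < (1 + t ^ 2) ^ 2 := by positivity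
    have : f t = t * (-7 / 4 + 3 / 4 * t ^ 4 + t ^ 2 - Real.log t) / (1 + t ^ 2) ^ 2 := by
      simp [f]; ring
    rw [this, le_div_iff₀ hD]
    nlinarith [sq_nonneg (t - 2), sq_nonneg t, mul_nonneg (by nlinarith : (0:ℝ) ≤ t) (by nlinarith : (0:ℝ) ≤ t - Real.log t)]
  have htop : Tendsto f atTop atTop := by
    have h8 : Tendsto (fun t : ℝ => t / 8) atTop atTop :=
      Tendsto.atTop_div_const (by norm_num) tendsto_id
    refine tendsto_atTop_mono' atTop ?_ h8
    filter_upwards [eventually_ge_atTop (2:ℝ)] with t ht using hbound t ht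
  refine ⟨hf1, hmono, htop, ?_, hmono.injOn, ?_⟩
  · intro t ht
    rcases eq_or_lt_of_le (Set.mem_Ici.mp ht : (1:ℝ) ≤ t) with h | h
    · simp [Set.mem_Ici, ← h, hf1]
    · have := hmono (Set.self_mem_Ici) ht h
      simp only [Set.mem_Ici]
      linarith [hf1 ▸ this]
  · intro y hy
    have hy0 : (0:ℝ) ≤ y := hy
    obtain ⟨b, hb⟩ := (htop.eventually (eventually_ge_atTop y)).exists_forall_of_atTop
    set c := max b 1 with hc
    have hc1 : (1:ℝ) ≤ c := le_max_right _ _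
    have hyc : y ≤ f c := hb c (le_max_left _ _)
    have : y ∈ Set.Icc (f 1) (f c) := ⟨hf1 ▸ hy0, hyc⟩
    have := intermediate_value_Icc hc1 (hcont.mono (Set.Icc_subset_Ici_self)) this
    obtain ⟨t, ht, hft⟩ := this
    exact ⟨t, ht.1, hft⟩
end

section
/- Fix r₀ > 0 and M ∈ ℝ, and define for t ≥ 1 the parametric curve r(t) = (r₀/(4t))(1+t²)² and u(t) = M − (r₀/4)(−7/4 + (3/4)t⁴ + t² − ln t). Then for every t > 1 one has r′(t) = (r₀/4)(1+t²)(3t²−1)/t² > 0 (so that r is strictly increasing) and u′(t) = −t · r′(t); in particular the curve, viewed as a graph U(r), has slope −t at r(t), and satisfies Newton's Euler–Lagrange equation r · U′(r) = C (1 + U′(r)²)² with the constant C = −r₀/4. -/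
open Filter Topology

/-- Properties of the parametric curve `r(t) = (r₀/(4t))(1+t²)²`,
`u(t) = M − (r₀/4)(−7/4 + (3/4)t⁴ + t² − ln t)` giving the explicit radial solution of
Newton's problem: for every `t > 1` one has `r′(t) = (r₀/4)(1+t²)(3t²−1)/t² > 0` and
`u′(t) = −t·r′(t)` (so the graph `U(r)` has slope `−t` at `r(t)`), `r` is strictly increasing
on `[1, ∞)`, and the Euler–Lagrange identity `r(t)·(−t) = C(1+t²)²` holds with `C = −r₀/4`,
i.e. `r·U′(r) = C(1+U′(r)²)²` along the curve. -/
theorem radial_solution_parametric_properties (r₀ M : ℝ) (hr₀ : 0 < r₀) :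
    let r : ℝ → ℝ := fun t => r₀ / (4 * t) * (1 + t ^ 2) ^ 2
    let u : ℝ → ℝ := fun t =>
      M - r₀ / 4 * (-7 / 4 + 3 / 4 * t ^ 4 + t ^ 2 - Real.log t)
    (∀ t : ℝ, 1 < t →
      HasDerivAt r (r₀ / 4 * (1 + t ^ 2) * (3 * t ^ 2 - 1) / t ^ 2) t ∧
      0 < r₀ / 4 * (1 + t ^ 2) * (3 * t ^ 2 - 1) / t ^ 2 ∧
      HasDerivAt u (-t * (r₀ / 4 * (1 + t ^ 2) * (3 * t ^ 2 - 1) / t ^ 2)) t) ∧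
    StrictMonoOn r (Set.Ici 1) ∧
    ∀ t : ℝ, 1 < t → r t * (-t) = -(r₀ / 4) * (1 + (-t) ^ 2) ^ 2 := by
  intro r u
  -- derivative of r at any nonzero t
  have hr : ∀ t : ℝ, t ≠ 0 →
      HasDerivAt r (r₀ / 4 * (1 + t ^ 2) * (3 * t ^ 2 - 1) / t ^ 2) t := by
    intro t ht
    have h0 : HasDerivAt (fun x : ℝ => 1 + x ^ 2) (2 * t) t := by
      simpa using (hasDerivAt_pow 2 t).const_add 1
    have h1 : HasDerivAt (fun x : ℝ => (1 + x ^ 2) ^ 2) (2 * (1 + t ^ 2) * (2 * t)) t := by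
      simpa using h0.fun_pow 2
    have h2 := h1.const_mul r₀
    have h3 : HasDerivAt (fun x : ℝ => 4 * x) 4 t := by
      simpa using (hasDerivAt_id t).const_mul 4
    have h4t : (4 : ℝ) * t ≠ 0 := mul_ne_zero (by norm_num) ht
    have hdiv := h2.fun_div h3 h4t
    have heq : r = fun x : ℝ => r₀ * (1 + x ^ 2) ^ 2 / (4 * x) := by
      funext x; show r₀ / (4 * x) * (1 + x ^ 2) ^ 2 = _; ring
    rw [heq]
    convert hdiv using 1
    · rfl
    · rfl
    field_simp
    ring
  constructor
  · intro t ht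
    have ht0 : t ≠ 0 := by linarith
    have hpos : 0 < r₀ / 4 * (1 + t ^ 2) * (3 * t ^ 2 - 1) / t ^ 2 := by
      apply div_pos
      · apply mul_pos (mul_pos (by linarith) (by positivity))
        nlinarith
      · positivity
    refine ⟨hr t ht0, hpos, ?_⟩
    have hinner : HasDerivAt (fun x : ℝ => -7 / 4 + 3 / 4 * x ^ 4 + x ^ 2 - Real.log x)
        (3 / 4 * (4 * t ^ 3) + 2 * t - t⁻¹) t := by
      have h4 : HasDerivAt (fun x : ℝ => x ^ 4) (4 * t ^ 3) t := by
        simpa using hasDerivAt_pow 4 t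
      have h2 : HasDerivAt (fun x : ℝ => x ^ 2) (2 * t) t := by
        simpa using hasDerivAt_pow 2 t
      exact (((h4.const_mul (3 / 4)).const_add (-7 / 4)).add h2).sub (Real.hasDerivAt_log ht0)
    have := (hinner.const_mul (r₀ / 4)).const_sub M
    convert this using 1
    · rfl
    · rfl
    field_simp
    ring
  constructor
  · have hconv : Convex ℝ (Set.Ici (1 : ℝ)) := convex_Ici 1
    apply strictMonoOn_of_deriv_pos hconv
    · intro x hx
      have hx0 : x ≠ 0 := by
        have : (1 : ℝ) ≤ x := hx
        linarith
      exact (hr x hx0).continuousAt.continuousWithinAt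
    · intro x hx
      rw [interior_Ici] at hx
      have hx1 : (1 : ℝ) < x := hx
      have hx0 : x ≠ 0 := by linarith
      rw [(hr x hx0).deriv]
      apply div_pos
      · apply mul_pos (mul_pos (by linarith) (by positivity))
        nlinarith
      · positivity
  · intro t ht
    have ht0 : t ≠ 0 := by linarith
    show r₀ / (4 * t) * (1 + t ^ 2) ^ 2 * (-t) = _
    field_simp
end

section
/- Let f(t) = (t/(1+t²)²) · (−7/4 + (3/4)t⁴ + t² − ln t) for t ≥ 1. Then lim_{t→∞} f(t)/t = 3/4, and lim_{t→∞} f(t)³ · (4t/(1+t²)²) = 27/16. The second limit expresses the asymptotic behavior r₀/R ≈ (27/16)(M/R)^{−3} of the radius r₀ = 4RT/(1+T²)² of the flat top of the optimal radial profile, where T = f⁻¹(M/R), as M/R → ∞. -/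
open Filter Topology

private lemma aux_inv_pow_tendsto (n : ℕ) (hn : n ≠ 0) :
    Tendsto (fun t : ℝ => (t ^ n)⁻¹) atTop (𝓝 0) :=
  tendsto_inv_atTop_zero.comp (tendsto_pow_atTop hn)

private lemma aux_log_div_pow4 :
    Tendsto (fun t : ℝ => Real.log t * (t ^ 4)⁻¹) atTop (𝓝 0) := by
  have h1 : Tendsto (fun t : ℝ => Real.log t ^ 1 / (1 * t + 0)) atTop (𝓝 0) :=
    Real.tendsto_pow_log_div_mul_add_atTop 1 0 1 one_ne_zero
  have h2 := h1.mul (aux_inv_pow_tendsto 3 (by norm_num))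
  rw [show (0:ℝ) * 0 = 0 by ring] at h2
  refine h2.congr' ?_
  filter_upwards [eventually_gt_atTop (0 : ℝ)] with t ht
  rw [pow_one, one_mul, add_zero, div_eq_mul_inv, mul_assoc, ← mul_inv,
    show t * t ^ 3 = t ^ 4 by ring]

private lemma aux_main :
    Tendsto (fun t : ℝ =>
      (-7 / 4 + 3 / 4 * t ^ 4 + t ^ 2 - Real.log t) / (1 + t ^ 2) ^ 2) atTop (𝓝 (3 / 4)) := by
  have hnum : Tendsto (fun t : ℝ =>
      -7 / 4 * (t ^ 4)⁻¹ + 3 / 4 + (t ^ 2)⁻¹ - Real.log t * (t ^ 4)⁻¹) atTop (𝓝 (3 / 4)) := by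
    have ha : Tendsto (fun t : ℝ => -7 / 4 * (t ^ 4)⁻¹) atTop (𝓝 (-7 / 4 * 0)) :=
      (aux_inv_pow_tendsto 4 (by norm_num)).const_mul _
    have hb : Tendsto (fun t : ℝ => -7 / 4 * (t ^ 4)⁻¹ + 3 / 4) atTop (𝓝 (-7 / 4 * 0 + 3 / 4)) :=
      ha.add_const _
    have hc := (hb.add (aux_inv_pow_tendsto 2 (by norm_num))).sub aux_log_div_pow4
    simpa using hc
  have hden : Tendsto (fun t : ℝ => ((t ^ 2)⁻¹ + 1) ^ 2) atTop (𝓝 1) := by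
    have := ((aux_inv_pow_tendsto 2 (by norm_num)).add_const (1:ℝ)).pow 2
    simpa using this
  have := hnum.div hden one_ne_zero
  rw [div_one] at this
  refine this.congr' ?_
  filter_upwards [eventually_gt_atTop (0 : ℝ)] with t ht
  rw [Pi.div_apply]
  have h2 : (1 + t ^ 2) ^ 2 ≠ 0 := by positivity
  field_simp

/-- Asymptotics of the function `f(t) = (t/(1+t²)²)(−7/4 + (3/4)t⁴ + t² − ln t)` from the
explicit radial solution of Newton's problem: `f(t)/t → 3/4` and
`f(t)³ · (4t/(1+t²)²) → 27/16` as `t → ∞` (the latter expressing the asymptotic behaviour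
`r₀/R ≈ (27/16)(M/R)⁻³` of the radius of the flat top). -/
theorem radial_parameter_function_asymptotics :
    let f : ℝ → ℝ := fun t =>
      t / (1 + t ^ 2) ^ 2 * (-7 / 4 + 3 / 4 * t ^ 4 + t ^ 2 - Real.log t)
    Tendsto (fun t => f t / t) atTop (𝓝 (3 / 4)) ∧
    Tendsto (fun t => f t ^ 3 * (4 * t / (1 + t ^ 2) ^ 2)) atTop (𝓝 (27 / 16)) := by
  intro f
  have h1 : Tendsto (fun t => f t / t) atTop (𝓝 (3 / 4)) := by
    refine aux_main.congr' ?_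
    filter_upwards [eventually_gt_atTop (0 : ℝ)] with t ht
    have h2 : (1 + t ^ 2) ^ 2 ≠ 0 := by positivity
    simp only [f]
    field_simp
  refine ⟨h1, ?_⟩
  have hden : Tendsto (fun t : ℝ => 4 / ((t ^ 2)⁻¹ + 1) ^ 2) atTop (𝓝 4) := by
    have hb : Tendsto (fun t : ℝ => ((t ^ 2)⁻¹ + 1) ^ 2) atTop (𝓝 1) := by
      have := ((aux_inv_pow_tendsto 2 (by norm_num)).add_const (1:ℝ)).pow 2
      simpa using this
    have := (tendsto_const_nhds (x := (4:ℝ))).div hb one_ne_zero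
    simpa [Pi.div_def] using this
  have := (h1.pow 3).mul hden
  have h27 : (3 / 4 : ℝ) ^ 3 * 4 = 27 / 16 := by norm_num
  rw [h27] at this
  refine this.congr' ?_
  filter_upwards [eventually_gt_atTop (0 : ℝ)] with t ht
  have h2 : (1 + t ^ 2) ^ 2 ≠ 0 := by positivity
  field_simp
end

section
/- Let (u_n) be a sequence in C_M converging pointwise on Ω to a function u ∈ C_M. Then F(u_n) → F(u), where F(v) = ∫_Ω 1/(1 + |∇v(x)|²) dx; that is, the Newton resistance functional is continuous along pointwise-convergent sequences of the class C_M. -/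
open Filter MeasureTheory Topology Set Metric


lemma concave_subgrad_le {E : Type*} [NormedAddCommGroup E] [NormedSpace ℝ E]
    {s : Set E} {f : E → ℝ} (hf : ConcaveOn ℝ s f)
    {x : E} (hx : x ∈ s) {f' : E →L[ℝ] ℝ} (hf' : HasFDerivAt f f' x)
    {y : E} (hy : y ∈ s) : f y ≤ f x + f' (y - x) := by
  rcases eq_or_ne y x with rfl | hne
  · simp
  have hline : ∀ t : ℝ, (AffineMap.lineMap x y : ℝ →ᵃ[ℝ] E) t = x + t • (y - x) := by
    intro t; simp [AffineMap.lineMap_apply]; abel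
  set g : ℝ → ℝ := fun t => f (x + t • (y - x)) with hg
  have hgconc : ConcaveOn ℝ ((AffineMap.lineMap x y : ℝ →ᵃ[ℝ] E) ⁻¹' s) (g) := by
    have := hf.comp_affineMap (AffineMap.lineMap x y : ℝ →ᵃ[ℝ] E)
    have heq : g = f ∘ (AffineMap.lineMap x y : ℝ →ᵃ[ℝ] E) := by
      ext t; simp [hg, hline t, Function.comp]
    rw [heq]; exact this
  have h0 : (0:ℝ) ∈ (AffineMap.lineMap x y : ℝ →ᵃ[ℝ] E) ⁻¹' s := by
    simp [Set.mem_preimage, hline 0, hx]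
  have h1 : (1:ℝ) ∈ (AffineMap.lineMap x y : ℝ →ᵃ[ℝ] E) ⁻¹' s := by
    simp only [Set.mem_preimage, hline 1, one_smul]
    convert hy using 2; abel
  have hgd : HasDerivAt g (f' (y - x)) 0 := by
    have hl : HasDerivAt (fun t : ℝ => x + t • (y - x)) (y - x) 0 := by
      simpa using (((hasDerivAt_id (0:ℝ)).smul_const (y - x)).const_add x)
    have hf'' : HasFDerivAt f f' ((0:ℝ) • (y-x) + x) := by simpa using hf'
    have := HasFDerivAt.comp_hasDerivAt (f := fun t : ℝ => x + t • (y - x)) 0 (by simpa [add_comm] using hf') hl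
    exact this
  have := (hgconc.neg).le_slope_of_hasDerivAt h0 h1 one_pos (hgd.neg)
  rw [slope_def_field] at this
  simp only [Pi.neg_apply] at this
  have hg0 : g 0 = f x := by simp [hg]
  have hg1 : g 1 = f y := by
    simp only [hg, one_smul]; congr 1; abel
  nlinarith [this]

-- norm bound on derivative of concave bounded function
lemma concave_fderiv_bound {E : Type*} [NormedAddCommGroup E] [NormedSpace ℝ E]
    {s : Set E} {f : E → ℝ} (hf : ConcaveOn ℝ s f) {M : ℝ}
    (hb : ∀ x ∈ s, 0 ≤ f x ∧ f x ≤ M)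
    {x : E} {r : ℝ} (hr : 0 < r) (hball : closedBall x r ⊆ s)
    {f' : E →L[ℝ] ℝ} (hf' : HasFDerivAt f f' x) : ‖f'‖ ≤ M / r := by
  have hx : x ∈ s := hball (mem_closedBall_self hr.le)
  have key : ∀ z : E, ‖z‖ ≤ r → -M ≤ f' z := by
    intro z hz
    have hy : x + z ∈ s := hball (by simp [mem_closedBall, dist_self_add_left, hz])
    have := concave_subgrad_le hf hx hf' hy
    have h1 : 0 ≤ f (x + z) := (hb _ hy).1
    have h2 : f x ≤ M := (hb _ hx).2
    simp only [add_sub_cancel_left] at this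
    linarith
  have hMnn : 0 ≤ M := le_trans (hb x hx).1 (hb x hx).2
  apply ContinuousLinearMap.opNorm_le_bound _ (by positivity)
  intro z
  rcases eq_or_ne z 0 with rfl | hz0
  · simp
  have hnz : 0 < ‖z‖ := norm_pos_iff.2 hz0
  have hw : ‖(r / ‖z‖) • z‖ ≤ r := by
    rw [norm_smul, Real.norm_eq_abs, abs_of_nonneg (by positivity)]
    rw [div_mul_cancel₀ _ hnz.ne']
  have h1 := key _ hw
  have h2 := key (-((r / ‖z‖) • z)) (by simpa using hw)
  rw [f'.map_smul, smul_eq_mul] at h1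
  rw [map_neg, f'.map_smul, smul_eq_mul] at h2
  have gen : ∀ a : ℝ, -M ≤ r / ‖z‖ * a → -(M / r * ‖z‖) ≤ a := by
    intro a h1
    rw [neg_le] at h1 ⊢
    calc -a = (‖z‖ / r) * (-(r / ‖z‖ * a)) := by field_simp
      _ ≤ (‖z‖ / r) * M := mul_le_mul_of_nonneg_left h1 (by positivity)
      _ = M / r * ‖z‖ := by ring
  rw [Real.norm_eq_abs, abs_le]
  refine ⟨gen _ h1, ?_⟩
  have := gen _ (by linarith [h2] : -M ≤ r / ‖z‖ * (-(f' z)))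
  linarith


-- a.e. differentiability of concave bounded functions on open sets
lemma concave_ae_diff {d : ℕ} {Ω : Set (EuclideanSpace ℝ (Fin d))} (hΩo : IsOpen Ω)
    {f : EuclideanSpace ℝ (Fin d) → ℝ} (hf : ConcaveOn ℝ Ω f) {M : ℝ}
    (hb : ∀ x ∈ Ω, 0 ≤ f x ∧ f x ≤ M) :
    ∀ᵐ x, x ∈ Ω → DifferentiableAt ℝ f x := by
  set N := {x | x ∈ Ω ∧ ¬ DifferentiableAt ℝ f x} with hN
  have hnull : volume N = 0 := by
    apply measure_null_of_locally_null
    intro x hx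
    obtain ⟨ε, hε, hball⟩ := Metric.isOpen_iff.1 hΩo x hx.1
    have hconc : ConcaveOn ℝ (ball x ε) f := hf.subset hball (convex_ball _ _)
    have hbd : Bornology.IsBounded (f '' ball x ε) := by
      apply (Metric.isBounded_Icc 0 M).subset
      rintro _ ⟨y, hy, rfl⟩
      exact ⟨(hb y (hball hy)).1, (hb y (hball hy)).2⟩
    obtain ⟨K, hK⟩ := hconc.exists_lipschitzOnWith_of_isBounded (half_lt_self hε) hbd
    have hrad := hK.ae_differentiableWithinAt_of_mem (μ := volume)
    refine ⟨N ∩ ball x (ε/2), inter_mem_nhdsWithin _ (ball_mem_nhds _ (by positivity)), ?_⟩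
    rw [MeasureTheory.ae_iff] at hrad
    refine measure_mono_null ?_ hrad
    rintro y ⟨⟨hyΩ, hynd⟩, hyb⟩
    intro hcon
    exact hynd ((hcon hyb).differentiableAt (isOpen_ball.mem_nhds hyb))
  have : {x | ¬ (x ∈ Ω → DifferentiableAt ℝ f x)} ⊆ N := by
    intro x hx
    push_neg at hx
    exact ⟨hx.1, hx.2⟩
  exact measure_mono_null this hnull

-- uniqueness of subgradient at a differentiability point
lemma subgrad_unique {E : Type*} [NormedAddCommGroup E] [NormedSpace ℝ E]
    {Ω : Set E} (hΩo : IsOpen Ω) {v : E → ℝ} {x : E} (hx : x ∈ Ω)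
    {f' : E →L[ℝ] ℝ} (hdv : HasFDerivAt v f' x)
    {g : E →L[ℝ] ℝ} (hg : ∀ y ∈ Ω, v y ≤ v x + g (y - x)) : g = f' := by
  have key : ∀ w : E, f' w ≤ g w := by
    intro w
    set h : ℝ → ℝ := fun t => v (x + t • w) with hh
    have hderiv : HasDerivAt h (f' w) 0 := by
      have hl : HasDerivAt (fun t : ℝ => x + t • w) w 0 := by
        simpa using (((hasDerivAt_id (0:ℝ)).smul_const w).const_add x)
      have := HasFDerivAt.comp_hasDerivAt (f := fun t : ℝ => x + t • w) 0
        (by simpa [add_comm] using hdv) hl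
      exact this
    have hslope : Tendsto (slope h 0) (𝓝[>] (0:ℝ)) (𝓝 (f' w)) :=
      (hasDerivAt_iff_tendsto_slope.1 hderiv).mono_left
        (nhdsWithin_mono 0 (fun t ht => ne_of_gt ht))
    refine le_of_tendsto hslope ?_
    have hmem : ∀ᶠ t : ℝ in 𝓝 0, x + t • w ∈ Ω := by
      have hc : Continuous (fun t : ℝ => x + t • w) := by continuity
      have := hc.tendsto 0
      simp only [zero_smul, add_zero] at this
      exact this (hΩo.mem_nhds hx)
    filter_upwards [nhdsWithin_le_nhds hmem, self_mem_nhdsWithin] with t hmemt (htpos : 0 < t)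
    have := hg _ hmemt
    rw [slope_def_field]
    simp only [hh, sub_zero, zero_smul, add_zero]
    rw [div_le_iff₀ htpos]
    have : g (t • w) = t * g w := by rw [g.map_smul, smul_eq_mul]
    have h2 := hg _ hmemt
    simp only [add_sub_cancel_left] at h2
    rw [this] at h2
    linarith [mul_comm (g w) t]
  ext w
  have h1 := key w
  have h2 := key (-w)
  rw [map_neg, map_neg, neg_le_neg_iff] at h2
  exact le_antisymm h2 h1

lemma fderiv_tendsto_pt {E : Type*} [NormedAddCommGroup E] [NormedSpace ℝ E]
    [FiniteDimensional ℝ E]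
    {Ω : Set E} (hΩo : IsOpen Ω) {M : ℝ}
    {u : ℕ → E → ℝ} {v : E → ℝ}
    (hu : ∀ n, ConcaveOn ℝ Ω (u n) ∧ ∀ x ∈ Ω, 0 ≤ u n x ∧ u n x ≤ M)
    (hptw : ∀ x ∈ Ω, Tendsto (fun n => u n x) atTop (𝓝 (v x)))
    {x : E} (hx : x ∈ Ω) (hdv : DifferentiableAt ℝ v x)
    (hdu : ∀ n, DifferentiableAt ℝ (u n) x) :
    Tendsto (fun n => fderiv ℝ (u n) x) atTop (𝓝 (fderiv ℝ v x)) := by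
  obtain ⟨ε, hε, hball⟩ := Metric.isOpen_iff.1 hΩo x hx
  set r := ε / 2 with hrdef
  have hr : 0 < r := by positivity
  have hcb : closedBall x r ⊆ Ω :=
    (closedBall_subset_ball (by simp [hrdef]; linarith)).trans hball
  have hbd : ∀ n, ‖fderiv ℝ (u n) x‖ ≤ M / r := fun n =>
    concave_fderiv_bound (hu n).1 (hu n).2 hr hcb (hdu n).hasFDerivAt
  apply tendsto_of_subseq_tendsto
  intro ns hns
  have hmem : ∀ k, fderiv ℝ (u (ns k)) x ∈ closedBall (0 : E →L[ℝ] ℝ) (M / r) := by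
    intro k; rw [mem_closedBall_zero_iff]; exact hbd (ns k)
  obtain ⟨g, -, φ, hφ, hgt⟩ := (isCompact_closedBall (0 : E →L[ℝ] ℝ) (M / r)).tendsto_subseq hmem
  have hm : Tendsto (fun k => ns (φ k)) atTop atTop := hns.comp hφ.tendsto_atTop
  have hsub : ∀ y ∈ Ω, v y ≤ v x + g (y - x) := by
    intro y hy
    have h1 : Tendsto (fun k => u (ns (φ k)) y) atTop (𝓝 (v y)) := (hptw y hy).comp hm
    have h2 : Tendsto (fun k => u (ns (φ k)) x + (fderiv ℝ (u (ns (φ k))) x) (y - x))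
        atTop (𝓝 (v x + g (y - x))) := by
      refine Tendsto.add ((hptw x hx).comp hm) ?_
      exact ((ContinuousLinearMap.apply ℝ ℝ (y - x)).continuous.tendsto g).comp hgt
    refine le_of_tendsto_of_tendsto' h1 h2 (fun k => ?_)
    exact concave_subgrad_le (hu (ns (φ k))).1 hx (hdu (ns (φ k))).hasFDerivAt hy
  have hgeq : g = fderiv ℝ v x := subgrad_unique hΩo hx hdv.hasFDerivAt hsub
  exact ⟨φ, hgeq ▸ hgt⟩


/-- Continuity of the Newton resistance functional `F(v) = ∫_Ω 1/(1 + |∇v|²) dx` along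
pointwise-convergent sequences in the class `C_M` of concave functions with `0 ≤ u ≤ M` on a
bounded open convex set `Ω ⊂ ℝ^d`: if `u_n ∈ C_M` converge pointwise on `Ω` to `u ∈ C_M`,
then `F(u_n) → F(u)`. -/
theorem newton_functional_continuous_on_CM (d : ℕ) (Ω : Set (EuclideanSpace ℝ (Fin d)))
    (hΩne : Ω.Nonempty) (hΩo : IsOpen Ω) (hΩb : Bornology.IsBounded Ω)
    (hΩconv : Convex ℝ Ω) (M : ℝ) (hM : 0 < M)
    (u : ℕ → EuclideanSpace ℝ (Fin d) → ℝ) (v : EuclideanSpace ℝ (Fin d) → ℝ)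
    (hu : ∀ n, ConcaveOn ℝ Ω (u n) ∧ ∀ x ∈ Ω, 0 ≤ u n x ∧ u n x ≤ M)
    (hv : ConcaveOn ℝ Ω v ∧ ∀ x ∈ Ω, 0 ≤ v x ∧ v x ≤ M)
    (hptw : ∀ x ∈ Ω, Tendsto (fun n => u n x) atTop (𝓝 (v x))) :
    Tendsto (fun n => ∫⁻ x in Ω, ENNReal.ofReal (1 / (1 + ‖gradient (u n) x‖ ^ 2)))
      atTop (𝓝 (∫⁻ x in Ω, ENNReal.ofReal (1 / (1 + ‖gradient v x‖ ^ 2)))) := by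
  have hΩm : MeasurableSet Ω := hΩo.measurableSet
  have hgradmeas : ∀ f : EuclideanSpace ℝ (Fin d) → ℝ, Measurable (gradient f) := by
    intro f
    have : gradient f = fun x => (InnerProductSpace.toDual ℝ _).symm (fderiv ℝ f x) := rfl
    rw [this]
    exact (LinearIsometryEquiv.continuous _).measurable.comp (measurable_fderiv ℝ f)
  have hmeas : ∀ f : EuclideanSpace ℝ (Fin d) → ℝ,
      Measurable (fun x => ENNReal.ofReal (1 / (1 + ‖gradient f x‖ ^ 2))) := by
    intro f
    apply Measurable.ennreal_ofReal
    exact Measurable.div measurable_const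
      (measurable_const.add (((hgradmeas f).norm).pow_const 2))
  apply tendsto_lintegral_of_dominated_convergence (fun _ => 1)
  · exact fun n => hmeas _
  · intro n
    refine Eventually.of_forall (fun x => ?_)
    rw [ENNReal.ofReal_le_one, div_le_one (by positivity)]
    nlinarith [sq_nonneg ‖gradient (u n) x‖]
  · simp only [lintegral_one, Measure.restrict_apply_univ]
    exact hΩb.measure_lt_top.ne
  · rw [ae_restrict_iff' hΩm]
    have h1 : ∀ᵐ x, x ∈ Ω → DifferentiableAt ℝ v x := concave_ae_diff hΩo hv.1 hv.2
    have h2 : ∀ᵐ x, ∀ n, x ∈ Ω → DifferentiableAt ℝ (u n) x :=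
      ae_all_iff.2 (fun n => concave_ae_diff hΩo (hu n).1 (hu n).2)
    filter_upwards [h1, h2] with x hx1 hx2 hxΩ
    have hfd : Tendsto (fun n => fderiv ℝ (u n) x) atTop (𝓝 (fderiv ℝ v x)) :=
      fderiv_tendsto_pt hΩo hu hptw hxΩ (hx1 hxΩ) (fun n => hx2 n hxΩ)
    have hnorm : Tendsto (fun n => ‖gradient (u n) x‖) atTop (𝓝 ‖gradient v x‖) := by
      have he : ∀ f : EuclideanSpace ℝ (Fin d) → ℝ, ‖gradient f x‖ = ‖fderiv ℝ f x‖ := fun f =>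
        LinearIsometryEquiv.norm_map _ _
      simp only [he]
      exact (continuous_norm.tendsto _).comp hfd
    have hcont : Continuous (fun t : ℝ => ENNReal.ofReal (1 / (1 + t ^ 2))) := by
      apply ENNReal.continuous_ofReal.comp
      exact Continuous.div continuous_const (by continuity) (fun t => by positivity)
    exact (hcont.tendsto _).comp hnorm
end
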